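/- arXiv:hep-th/0110097 — 4 statements merged into one kernel-verified Lean document; each statement's English description precedes it below -/
import Mathlib

section
/- Let n ≥ 2 be an integer and let φ be a formal power series over ℚ with constant coefficient 1 such that φ^n = (g_n)^{n+1}, where g_n is regarded as a formal power series. Then for every index j with 0 ≤ j ≤ n−1, the coefficient of X^j in φ equals the coefficient of X^j in the polynomial g_{n+1}. In other words, the truncation of g_n^{(n+1)/n} up to degree n−1 equals g_{n+1}. -/
open Polynomial PowerSeries

/-- The polynomial `g_n(x) = Σ_{k=0}^{⌊n/2⌋} (n/(n−k))·binom(n−k, k)·x^k` over ℚ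
for `n ≥ 1`, with `g_0 = 2`. -/
noncomputable def gP (n : ℕ) : Polynomial ℚ :=
  if n = 0 then Polynomial.C 2
  else ∑ k ∈ Finset.range (n / 2 + 1),
    Polynomial.C ((n : ℚ) / ((n : ℚ) - (k : ℚ)) * (((n - k).choose k : ℕ) : ℚ)) *
      Polynomial.X ^ k

lemma gP_coeff {n : ℕ} (hn : 1 ≤ n) (k : ℕ) :
    (gP n).coeff k = (n : ℚ) / ((n : ℚ) - (k : ℚ)) * (((n - k).choose k : ℕ) : ℚ) := by
  rw [gP, if_neg (by omega), Polynomial.finset_sum_coeff]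
  simp only [Polynomial.coeff_C_mul, Polynomial.coeff_X_pow, mul_ite, mul_one, mul_zero]
  rw [Finset.sum_ite_eq (Finset.range (n / 2 + 1)) k]
  split
  · rfl
  · rename_i h
    rw [Finset.mem_range] at h
    have : (n - k).choose k = 0 := Nat.choose_eq_zero_of_lt (by omega)
    rw [this]
    simp

lemma rat_id (m j : ℕ) (hm : 1 ≤ m) (hj : 2 * j ≤ m) :
    ((m:ℚ) + 2) / (((m:ℚ) + 2) - ((j:ℚ)+1)) * (((m + 1 - j).choose (j+1) : ℕ) : ℚ) =
      ((m:ℚ) + 1) / (((m:ℚ) + 1) - ((j:ℚ)+1)) * (((m - j).choose (j+1) : ℕ) : ℚ)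
        + (m:ℚ) / ((m:ℚ) - (j:ℚ)) * (((m - j).choose j : ℕ) : ℚ) := by
  have h1 : m + 1 - j = (m - j) + 1 := by omega
  rw [h1, Nat.choose_succ_succ]
  have cross : (((m-j).choose (j+1) : ℕ) : ℚ) * ((j:ℚ)+1)
      = (((m-j).choose j : ℕ) : ℚ) * ((m:ℚ) - 2*j) := by
    have h := congrArg (Nat.cast : ℕ → ℚ) (Nat.choose_succ_right_eq (m - j) j)
    have h3 : m - j - j = m - 2 * j := by omega
    rw [h3] at h
    push_cast [Nat.cast_sub (by omega : 2*j ≤ m)] at h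
    linarith [h]
  have hmj : (m:ℚ) - j ≠ 0 := by
    have : (j:ℚ) < m := by exact_mod_cast (by omega : j < m)
    linarith
  have hmj1 : ((m:ℚ) + 2) - ((j:ℚ)+1) ≠ 0 := by
    have : (j:ℚ) ≤ m := by exact_mod_cast (by omega : j ≤ m)
    linarith
  have hmj2 : ((m:ℚ) + 1) - ((j:ℚ)+1) = (m:ℚ) - j := by ring
  rw [hmj2]
  push_cast
  rw [div_mul_eq_mul_div, div_mul_eq_mul_div, div_mul_eq_mul_div, ← add_div,
    div_eq_div_iff hmj1 hmj]
  simp only [Nat.succ_eq_add_one]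
  linear_combination -cross

lemma gP_rec (m : ℕ) : gP (m + 2) = gP (m + 1) + Polynomial.X * gP m := by
  rcases Nat.eq_zero_or_pos m with rfl | hm
  · ext k
    simp only [gP, if_neg (by norm_num : (2:ℕ) ≠ 0), if_neg (by norm_num : (1:ℕ) ≠ 0),
      if_pos rfl]
    norm_num [Finset.sum_range_succ]
  · ext k
    rw [Polynomial.coeff_add, gP_coeff (by omega) k, gP_coeff (by omega) k]
    cases k with
    | zero =>
      have h0 : (Polynomial.X * gP m).coeff 0 = 0 := by
        rw [Polynomial.mul_coeff_zero, Polynomial.coeff_X_zero, zero_mul]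
      rw [h0]
      push_cast
      have h1 : ((m:ℚ)+2) ≠ 0 := by positivity
      have h2 : ((m:ℚ)+1) ≠ 0 := by positivity
      norm_num
      rw [div_self h1, div_self h2]
    | succ j =>
      rw [Polynomial.coeff_X_mul, gP_coeff (by omega) j]
      push_cast
      by_cases hj : 2 * j ≤ m
      · exact rat_id m j hm hj
      · have c1 : (m + 1 - j).choose (j+1) = 0 := Nat.choose_eq_zero_of_lt (by omega)
        have c2 : (m - j).choose (j+1) = 0 := Nat.choose_eq_zero_of_lt (by omega)
        have c3 : (m - j).choose j = 0 := Nat.choose_eq_zero_of_lt (by omega)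
        rw [c1, c2, c3]
        norm_num

lemma gP_comp (m : ℕ) :
    (gP m).comp (Polynomial.X ^ 2 - Polynomial.X) =
      Polynomial.X ^ m + (1 - Polynomial.X) ^ m := by
  induction m using Nat.twoStepInduction with
  | zero =>
    rw [gP, if_pos rfl]
    simp
    rw [map_ofNat (Polynomial.C : ℚ →+* Polynomial ℚ) 2]
    norm_num
  | one =>
    rw [gP, if_neg one_ne_zero]
    norm_num [Finset.sum_range_one]
  | more m ih1 ih2 =>
    rw [gP_rec, Polynomial.add_comp, Polynomial.mul_comp, Polynomial.X_comp, ih1, ih2]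
    ring

lemma pow_helper {R : Type*} [CommRing R] (x y c : R) (N i j : ℕ)
    (hi : N ≤ i) (hj : N ≤ j) : (x * y) ^ N ∣ x ^ i * y ^ j * c := by
  rw [mul_pow]
  exact Dvd.dvd.mul_right (mul_dvd_mul (pow_dvd_pow _ hi) (pow_dvd_pow _ hj)) c

lemma expand_key {R : Type*} [CommRing R] (a b : R) (m N : ℕ) :
    (a ^ N + b ^ N) ^ (m+1) - (a ^ (N*(m+1)) + b ^ (N*(m+1))) =
      ∑ x ∈ Finset.range m, a ^ (N*(x+1)) * b ^ (N*(m - x)) * (((m+1).choose (x+1) : ℕ) : R) := by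
  rw [add_pow, Finset.sum_range_succ', Finset.sum_range_succ]
  simp only [Nat.choose_self, Nat.choose_zero_right, Nat.cast_one, Nat.sub_self, pow_zero,
    mul_one, one_mul, Nat.sub_zero, ← pow_mul, Nat.succ_sub_succ]
  ring

lemma cross_dvd {R : Type*} [CommRing R] (a b : R) (n : ℕ) (hn : 1 ≤ n) :
    (a * b) ^ n ∣ (a ^ (n+1) + b ^ (n+1)) ^ n - (a ^ n + b ^ n) ^ (n+1) := by
  obtain ⟨m, rfl⟩ : ∃ m, n = m + 1 := ⟨n - 1, by omega⟩
  have h1 : (a * b) ^ (m+1) ∣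
      (a ^ (m+2) + b ^ (m+2)) ^ (m+1) - (a ^ ((m+2)*(m+1)) + b ^ ((m+2)*(m+1))) := by
    rw [expand_key]
    refine Finset.dvd_sum fun x hx => pow_helper _ _ _ _ _ _ ?_ ?_
    · calc m + 1 ≤ (m+2) * 1 := by omega
        _ ≤ (m+2) * (x+1) := Nat.mul_le_mul_left _ (by omega)
    · rw [Finset.mem_range] at hx
      calc m + 1 ≤ (m+2) * 1 := by omega
        _ ≤ (m+2) * (m - x) := Nat.mul_le_mul_left _ (by omega)
  have h2 : (a * b) ^ (m+1) ∣
      (a ^ (m+1) + b ^ (m+1)) ^ (m+2) - (a ^ ((m+1)*(m+2)) + b ^ ((m+1)*(m+2))) := by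
    rw [expand_key]
    refine Finset.dvd_sum fun x hx => pow_helper _ _ _ _ _ _ ?_ ?_
    · calc m + 1 ≤ (m+1) * 1 := by omega
        _ ≤ (m+1) * (x+1) := Nat.mul_le_mul_left _ (by omega)
    · rw [Finset.mem_range] at hx
      calc m + 1 ≤ (m+1) * 1 := by omega
        _ ≤ (m+1) * (m + 1 - x) := Nat.mul_le_mul_left _ (by omega)
  have e : (a ^ (m+1+1) + b ^ (m+1+1)) ^ (m+1) - (a ^ (m+1) + b ^ (m+1)) ^ (m+1+1) =
      ((a ^ (m+2) + b ^ (m+2)) ^ (m+1) - (a ^ ((m+2)*(m+1)) + b ^ ((m+2)*(m+1))))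
      - ((a ^ (m+1) + b ^ (m+1)) ^ (m+2) - (a ^ ((m+1)*(m+2)) + b ^ ((m+1)*(m+2)))) := by
    ring
  rw [e]
  exact dvd_sub h1 h2

lemma comp_dvd (n : ℕ) (p : Polynomial ℚ)
    (h : (Polynomial.X ^ 2 - Polynomial.X) ^ n ∣
      p.comp (Polynomial.X ^ 2 - Polynomial.X)) :
    Polynomial.X ^ n ∣ p := by
  induction n generalizing p with
  | zero => exact one_dvd _
  | succ k ih =>
    have hw0 : (Polynomial.X ^ 2 - Polynomial.X : Polynomial ℚ) ≠ 0 := by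
      intro hc
      have := congrArg (fun q => Polynomial.coeff q 1) hc
      simp at this
    have hX : Polynomial.X ∣ p := by
      rw [Polynomial.X_dvd_iff, Polynomial.coeff_zero_eq_eval_zero]
      have h1 : (Polynomial.X ^ 2 - Polynomial.X : Polynomial ℚ) ∣
          p.comp (Polynomial.X ^ 2 - Polynomial.X) :=
        dvd_trans (dvd_pow_self _ (by omega)) h
      have h2 : Polynomial.X ∣ p.comp (Polynomial.X ^ 2 - Polynomial.X) := by
        refine dvd_trans ?_ h1
        exact ⟨Polynomial.X - 1, by ring⟩
      rw [Polynomial.X_dvd_iff, Polynomial.coeff_zero_eq_eval_zero] at h2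
      simpa using h2
    obtain ⟨q, rfl⟩ := hX
    rw [Polynomial.mul_comp, Polynomial.X_comp, pow_succ'] at h
    rw [pow_succ']
    exact mul_dvd_mul_left _ (ih q ((mul_dvd_mul_iff_left hw0).mp h))

lemma key_dvd (n : ℕ) (hn : 1 ≤ n) :
    (Polynomial.X : Polynomial ℚ) ^ n ∣ (gP (n+1)) ^ n - (gP n) ^ (n+1) := by
  apply comp_dvd
  rw [Polynomial.sub_comp, Polynomial.pow_comp, Polynomial.pow_comp, gP_comp, gP_comp]
  exact dvd_trans (pow_dvd_pow_of_dvd ⟨-1, by ring⟩ n)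
    (cross_dvd (Polynomial.X : Polynomial ℚ) (1 - Polynomial.X) n hn)

theorem truncation_of_g_pow (n : ℕ) (hn : 2 ≤ n) (φ : PowerSeries ℚ)
    (hconst : PowerSeries.constantCoeff φ = 1)
    (hpow : φ ^ n = ((gP n : PowerSeries ℚ)) ^ (n + 1)) :
    ∀ j : ℕ, j ≤ n - 1 → PowerSeries.coeff j φ = (gP (n + 1)).coeff j := by
  intro j hj
  set ψ : PowerSeries ℚ := (gP (n+1) : PowerSeries ℚ) with hψ
  have hψc : PowerSeries.constantCoeff ψ = 1 := by
    rw [hψ, ← PowerSeries.coeff_zero_eq_constantCoeff_apply, Polynomial.coeff_coe,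
      gP_coeff (by omega)]
    have h1 : ((n:ℚ)+1) ≠ 0 := by positivity
    norm_num
    exact h1
  have hdvd : (PowerSeries.X : PowerSeries ℚ) ^ n ∣ ψ ^ n - φ ^ n := by
    have h := map_dvd (Polynomial.coeToPowerSeries.ringHom (R := ℚ)) (key_dvd n (by omega))
    simp only [map_sub, map_pow, Polynomial.coeToPowerSeries.ringHom_apply,
      Polynomial.coe_X] at h
    rwa [← hpow, ← hψ] at h
  rw [← geom_sum₂_mul ψ φ n] at hdvd
  have hunit : IsUnit (∑ i ∈ Finset.range n, ψ ^ i * φ ^ (n - 1 - i)) := by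
    rw [PowerSeries.isUnit_iff_constantCoeff, map_sum]
    simp only [map_mul, map_pow, hψc, hconst, one_pow, one_mul]
    simp only [Finset.sum_const, Finset.card_range, nsmul_eq_mul, mul_one]
    exact isUnit_iff_ne_zero.mpr (by positivity)
  have hdvd2 : (PowerSeries.X : PowerSeries ℚ) ^ n ∣ ψ - φ := by
    obtain ⟨u, hu⟩ := hunit
    rw [← hu] at hdvd
    exact (Units.dvd_mul_left).mp hdvd
  rw [PowerSeries.X_pow_dvd_iff] at hdvd2
  have h3 := hdvd2 j (by omega)
  rw [map_sub, sub_eq_zero] at h3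
  rw [← h3, hψ, Polynomial.coeff_coe]
end

section
/- Let n ≥ 3 and k ≥ 2 be integers. For j ∈ {k, k−2} let φ_j be a formal power series over ℚ with constant coefficient 1 such that φ_j^n = (g_n(X²))^{jn+1}, and let r_{n,j} denote the coefficient of X^{jn+2} in φ_j. Then k·n·(k·n+2)·r_{n,k} = 4·(−1)^n·(k·n+1)·((k−1)·n+1)·r_{n,k−2}. -/
open Polynomial PowerSeries

namespace RrecAux

/-- Coefficients of the power series `a` with `a^2 = a + X^2`, `a(0)=1`. -/
def ac : ℕ → ℚ
  | 0 => 1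
  | 1 => 0
  | 2 => 1
  | (p+3) => - ∑ i ∈ (Finset.Ioo 0 (p+3)).attach, ac i.1 * ac ((p+3) - i.1)
  decreasing_by
  · obtain ⟨h1,h2⟩ := Finset.mem_Ioo.mp i.2; omega
  · obtain ⟨h1,h2⟩ := Finset.mem_Ioo.mp i.2; omega

lemma acrec (p : ℕ) (hp : 1 ≤ p) :
    ac p + ∑ i ∈ Finset.Ioo 0 p, ac i * ac (p - i) = (if p = 2 then 1 else 0) := by
  match p, hp with
  | 1, _ => simp [ac, show Finset.Ioo 0 1 = ∅ by decide]
  | 2, _ => simp [ac, show Finset.Ioo 0 2 = {1} by decide]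
  | (p+3), _ =>
    rw [show ac (p+3) = - ∑ i ∈ (Finset.Ioo 0 (p+3)).attach, ac i.1 * ac ((p+3) - i.1) from
      by rw [ac]]
    rw [Finset.sum_attach (Finset.Ioo 0 (p+3)) (fun i => ac i * ac ((p+3) - i))]
    simp [show p + 3 ≠ 2 by omega]

noncomputable def aS : PowerSeries ℚ := PowerSeries.mk ac

lemma ha0 : PowerSeries.constantCoeff aS = 1 := by
  simp [aS, ← coeff_zero_eq_constantCoeff, ac]

lemma ha2 : (PowerSeries.coeff 2) aS = 1 := by simp [aS, ac]

lemma ha : aS * aS = aS + (PowerSeries.X : PowerSeries ℚ) ^ 2 := by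
  ext p
  rw [PowerSeries.coeff_mul, map_add, Finset.Nat.sum_antidiagonal_eq_sum_range_succ_mk]
  simp only [aS, coeff_mk, PowerSeries.coeff_X_pow]
  rcases Nat.eq_zero_or_pos p with hp | hp
  · subst hp; simp [ac]
  · rw [Finset.sum_range_succ]
    have h0 : 0 ∈ Finset.range p := by simp [hp]
    rw [← Finset.sum_erase_add _ _ h0]
    have : (Finset.range p).erase 0 = Finset.Ioo 0 p := by
      rw [Finset.range_eq_Ico, Finset.Ico_erase_left]
    rw [this]
    have hrec := acrec p hp
    have hac0 : ac 0 = 1 := by simp [ac]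
    simp only [Nat.sub_zero, Nat.sub_self, hac0, one_mul, mul_one]
    linarith [hrec]



def cg (N j : ℕ) : ℚ := (N : ℚ) / ((N : ℚ) - (j : ℚ)) * (((N - j).choose j : ℕ) : ℚ)

lemma cg_zero {N j : ℕ} (h : N / 2 < j) : cg N j = 0 := by
  have : N - j < j := by omega
  rw [cg, Nat.choose_eq_zero_of_lt this]
  simp

lemma gPcoeff (N : ℕ) (hN : N ≠ 0) (j : ℕ) : (gP N).coeff j = cg N j := by
  rw [gP, if_neg hN]
  rw [Polynomial.finset_sum_coeff]
  simp only [Polynomial.coeff_C_mul, Polynomial.coeff_X_pow, mul_ite, mul_one, mul_zero]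
  rw [Finset.sum_ite_eq (Finset.range (N/2+1)) j
    (fun k => (N : ℚ) / ((N : ℚ) - (k : ℚ)) * (((N - k).choose k : ℕ) : ℚ))]
  simp only [Finset.mem_range]
  split_ifs with h
  · rfl
  · rw [cg_zero (by omega)]

lemma cg_rec (N j : ℕ) (hN : 3 ≤ N) : cg N (j+1) = cg (N-1) (j+1) + cg (N-2) j := by
  by_cases hle : 2*(j+1) ≤ N
  · set u := N - j - 2 with hu
    have hu1 : 1 ≤ u := by omega
    have hju : j ≤ u := by omega
    have h1 : N - (j+1) = u + 1 := by omega
    have h2 : (N-1) - (j+1) = u := by omega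
    have h3 : (N-2) - j = u := by omega
    have hcsr := Nat.choose_succ_right_eq u j
    have hpas := Nat.choose_succ_succ u j
    -- cast versions
    set A := (u.choose (j+1) : ℚ) with hA
    set B := (u.choose j : ℚ) with hB
    have hcsrQ : A * ((j:ℚ)+1) = B * ((u:ℚ) - (j:ℚ)) := by
      have h := hcsr
      qify [hju] at h
      push_cast
      linarith [h]
    have hNc : (N : ℚ) = (u:ℚ) + (j:ℚ) + 2 := by
      have h : N = u + j + 2 := by omega
      rw [h]; push_cast; ring
    have hN1 : ((N-1 : ℕ) : ℚ) = (u:ℚ) + (j:ℚ) + 1 := by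
      have h : N - 1 = u + j + 1 := by omega
      rw [h]; push_cast; ring
    have hN2 : ((N-2 : ℕ) : ℚ) = (u:ℚ) + (j:ℚ) := by
      have h : N - 2 = u + j := by omega
      rw [h]; push_cast; ring
    have hpasQ : ((u+1).choose (j+1) : ℚ) = B + A := by
      rw [hpas]; push_cast; ring
    have hu0 : (u:ℚ) ≠ 0 := by
      have : (1:ℚ) ≤ (u:ℚ) := by exact_mod_cast hu1
      linarith
    have hu1' : (u:ℚ) + 1 ≠ 0 := by
      positivity
    have c1 : cg N (j+1) = ((u:ℚ)+(j:ℚ)+2) * (B+A) / ((u:ℚ)+1) := by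
      rw [cg, h1, hNc, hpasQ]; push_cast; ring
    have c2 : cg (N-1) (j+1) = ((u:ℚ)+(j:ℚ)+1) * A / (u:ℚ) := by
      rw [cg, h2, hN1, ← hA]; push_cast; ring
    have c3 : cg (N-2) j = ((u:ℚ)+(j:ℚ)) * B / (u:ℚ) := by
      rw [cg, h3, hN2, ← hB]; push_cast; ring
    rw [c1, c2, c3]
    field_simp
    linear_combination -hcsrQ
  · have e1 : cg N (j+1) = 0 := cg_zero (by omega)
    have e2 : cg (N-1) (j+1) = 0 := cg_zero (by omega)
    have e3 : cg (N-2) j = 0 := by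
      rcases Nat.eq_zero_or_pos j with hj | hj
      · omega
      · exact cg_zero (by omega)
    rw [e1, e2, e3]; ring


end RrecAux

namespace RrecAux

lemma gP_one : gP 1 = 1 := by
  rw [gP]
  norm_num

lemma gP_rec (s : ℕ) : gP (s+2) = gP (s+1) + Polynomial.X * gP s := by
  rcases Nat.eq_zero_or_pos s with hs | hs
  · subst hs
    rw [gP_one, gP, gP, if_neg (by norm_num), if_pos rfl]
    norm_num [Finset.sum_range_succ]
  · apply Polynomial.ext
    intro j
    rw [Polynomial.coeff_add, gPcoeff (s+2) (by omega), gPcoeff (s+1) (by omega)]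
    rcases Nat.eq_zero_or_pos j with hj | hj
    · subst hj
      rw [Polynomial.mul_coeff_zero, Polynomial.coeff_X_zero, zero_mul, add_zero]
      have c1 : cg (s+2) 0 = 1 := by
        rw [cg]; push_cast; rw [Nat.choose_zero_right]
        push_cast
        rw [sub_zero, div_self (by positivity), one_mul]
      have c2 : cg (s+1) 0 = 1 := by
        rw [cg]; push_cast; rw [Nat.choose_zero_right]
        push_cast
        rw [sub_zero, div_self (by positivity), one_mul]
      rw [c1, c2]
    · obtain ⟨j', rfl⟩ : ∃ j', j = j' + 1 := ⟨j - 1, by omega⟩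
      rw [Polynomial.coeff_X_mul, gPcoeff s (by omega)]
      have := cg_rec (s+2) j' (by omega)
      simpa using this

lemma gcomp : ∀ s : ℕ, (((gP s).comp (Polynomial.X ^ 2) : Polynomial ℚ) : PowerSeries ℚ)
    = aS ^ s + (1 - aS) ^ s := by
  intro s
  induction s using Nat.strong_induction_on with
  | _ s ih =>
    match s with
    | 0 =>
      simp only [pow_zero, gP, if_pos rfl, if_true]
      rw [Polynomial.C_comp, Polynomial.coe_C, show (2:ℚ) = 1 + 1 by norm_num, map_add, map_one]
    | 1 => simp [gP_one]
    | (t+2) =>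
      rw [gP_rec t, Polynomial.add_comp, Polynomial.mul_comp, Polynomial.X_comp]
      push_cast [Polynomial.coe_add, Polynomial.coe_mul, Polynomial.coe_pow, Polynomial.coe_X]
      rw [ih (t+1) (by omega), ih t (by omega)]
      linear_combination -(aS^t + (1 - aS)^t) * ha

lemma pow_eq {N : ℕ} (hN : N ≠ 0) {x y : PowerSeries ℚ}
    (hx : PowerSeries.constantCoeff x = 1) (hy : PowerSeries.constantCoeff y = 1) (h : x ^ N = y ^ N) : x = y := by
  have hfac : (∑ i ∈ Finset.range N, x ^ i * y ^ (N - 1 - i)) * (x - y) = 0 := by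
    rw [geom_sum₂_mul, h, sub_self]
  rcases mul_eq_zero.mp hfac with h0 | h0
  · exfalso
    have hc : PowerSeries.constantCoeff (∑ i ∈ Finset.range N, x ^ i * y ^ (N - 1 - i)) = N := by
      rw [map_sum]
      simp [hx, hy]
    rw [h0, map_zero] at hc
    exact hN (by exact_mod_cast hc.symm)
  · linear_combination h0

end RrecAux


open RrecAux in
set_option maxHeartbeats 4000000 in
theorem r_recursion (n k : ℕ) (hn : 3 ≤ n) (hk : 2 ≤ k)
    (φ ψ : PowerSeries ℚ)
    (hφconst : PowerSeries.constantCoeff φ = 1)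
    (hψconst : PowerSeries.constantCoeff ψ = 1)
    (hφ : φ ^ n = (((gP n).comp (Polynomial.X ^ 2) : Polynomial ℚ) :
      PowerSeries ℚ) ^ (k * n + 1))
    (hψ : ψ ^ n = (((gP n).comp (Polynomial.X ^ 2) : Polynomial ℚ) :
      PowerSeries ℚ) ^ ((k - 2) * n + 1)) :
    ((k : ℚ) * n) * ((k : ℚ) * n + 2) * PowerSeries.coeff (k * n + 2) φ
      = 4 * (-1) ^ n * ((k : ℚ) * n + 1) * (((k : ℚ) - 1) * n + 1) *
          PowerSeries.coeff ((k - 2) * n + 2) ψ := by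
  classical
  have hn0 : n ≠ 0 := by omega
  have hGc := RrecAux.gcomp n
  set aa := RrecAux.aS with haa
  set XX := (PowerSeries.X : PowerSeries ℚ) with hXX
  set P := aa ^ n with hPd
  set Q := (1 - aa) ^ n with hQd
  rw [hGc] at hφ hψ
  set Cm := PowerSeries.C (((k*n+1 : ℕ)):ℚ) with hCm
  set Cn := PowerSeries.C ((n:ℚ)) with hCnd
  set Ce := PowerSeries.C ((-1:ℚ)^n) with hCe
  set da := d⁄dX ℚ aa with hdad
  set dP := d⁄dX ℚ P with hdPd
  set dQ := d⁄dX ℚ Q with hdQd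
  set dφ := d⁄dX ℚ φ with hdφd
  -- basic facts
  have h1x : aa * aa = aa + XX^2 := RrecAux.ha
  have haa0 : PowerSeries.constantCoeff aa = 1 := RrecAux.ha0
  have haa2 : (PowerSeries.coeff 2) aa = 1 := RrecAux.ha2
  have hGconst : PowerSeries.constantCoeff (P + Q) = 1 := by
    rw [hPd, hQd, map_add, map_pow, map_pow, haa0, map_sub, map_one, haa0]
    simp [zero_pow hn0]
  have hGne : (P + Q) ≠ 0 := fun h => by
    rw [h, map_zero] at hGconst; exact zero_ne_one hGconst
  have hφne : φ ≠ 0 := fun h => by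
    rw [h, map_zero] at hφconst; exact zero_ne_one hφconst
  have haane : aa ≠ 0 := fun h => by
    rw [h, map_zero] at haa0; exact zero_ne_one haa0
  have h1aane : (1 - aa) ≠ 0 := fun h => by
    have := congrArg (PowerSeries.coeff 2) h
    rw [map_sub, haa2, map_zero] at this
    simp [PowerSeries.coeff_one] at this
  have h2am1ne : (2*aa - 1) ≠ 0 := fun h => by
    have := congrArg (PowerSeries.constantCoeff) h
    rw [map_sub, map_mul, map_ofNat, haa0, map_one, map_zero] at this
    norm_num at this
  have hCn_ne : Cn ≠ 0 := fun h => by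
    have := congrArg (PowerSeries.constantCoeff) h
    rw [hCnd, constantCoeff_C, map_zero] at this
    exact hn0 (by exact_mod_cast this)
  have hCe_ne : Ce ≠ 0 := fun h => by
    have := congrArg (PowerSeries.constantCoeff) h
    rw [hCe, constantCoeff_C, map_zero] at this
    exact pow_ne_zero n (by norm_num : (-1:ℚ) ≠ 0) this
  -- the inverse of G
  have hGunit : IsUnit (P + Q) := by
    rw [PowerSeries.isUnit_iff_constantCoeff, hGconst]; exact isUnit_one
  obtain ⟨u, hu⟩ := hGunit
  set gi := ((u⁻¹ : (PowerSeries ℚ)ˣ) : PowerSeries ℚ) with hgid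
  have h7x : (P + Q) * gi = 1 := by rw [← hu, hgid]; exact_mod_cast u.mul_inv
  have hdgi : d⁄dX ℚ gi = -gi^2 * (dP + dQ) := by
    have h := PowerSeries.derivative_inv u
    rw [hu] at h
    rw [hgid]
    rw [h, map_add, ← hdPd, ← hdQd]
  -- derivative facts
  have hdX : d⁄dX ℚ XX = 1 := by rw [hXX]; exact PowerSeries.derivative_X
  have h2x : (2*aa - 1) * da = 2 * XX := by
    have h := congrArg (d⁄dX ℚ) h1x
    simp only [Derivation.leibniz, Derivation.leibniz_pow, hdX, map_add,
      smul_eq_mul, nsmul_eq_mul] at h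
    rw [← hdad] at h
    push_cast at h
    linear_combination h
  have hpow_a : aa^(n-1) * aa = P := by
    rw [hPd, ← pow_succ, Nat.sub_add_cancel (show 1 ≤ n by omega)]
  have hpow_b : (1-aa)^(n-1) * (1-aa) = Q := by
    rw [hQd, ← pow_succ, Nat.sub_add_cancel (show 1 ≤ n by omega)]
  have hCncast : ((n : ℕ) : PowerSeries ℚ) = Cn := by
    rw [hCnd, map_natCast]
  have hCmcast : ((k*n+1 : ℕ) : PowerSeries ℚ) = Cm := by
    rw [hCm, map_natCast]
  have h3x : aa * dP = Cn * (P * da) := by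
    have h : dP = ((n : ℕ) : PowerSeries ℚ) * (aa^(n-1) * da) := by
      rw [hdPd, hPd, Derivation.leibniz_pow]
      simp only [smul_eq_mul, nsmul_eq_mul, ← hdad]
      try ring
    rw [h, hCncast]
    linear_combination Cn * da * hpow_a
  have h4x : (1 - aa) * dQ = -(Cn * (Q * da)) := by
    have hd1a : d⁄dX ℚ (1 - aa) = -da := by
      rw [map_sub, ← hdad]
      simp
    have h : dQ = ((n : ℕ) : PowerSeries ℚ) * ((1-aa)^(n-1) * (-da)) := by
      rw [hdQd, hQd, Derivation.leibniz_pow]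
      simp only [smul_eq_mul, nsmul_eq_mul, hd1a]
      try ring
    rw [h, hCncast]
    linear_combination -(Cn*da) * hpow_b
  have h5x : P * Q = Ce * (XX^(2*n)) := by
    have h5a : aa*(1-aa) = -(XX^2) := by linear_combination -h1x
    have hneg : ((-1 : PowerSeries ℚ))^n = Ce := by
      rw [hCe, map_pow, map_neg, map_one]
    calc P * Q = (aa*(1-aa))^n := by rw [hPd, hQd, ← mul_pow]
    _ = (-(XX^2))^n := by rw [h5a]
    _ = Ce * (XX^(2*n)) := by
        rw [neg_pow, hneg, pow_mul]
  -- the ODE for φ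
  have hΦ : φ^(n-1) * φ = φ^n := by rw [← pow_succ, Nat.sub_add_cancel (show 1 ≤ n by omega)]
  have hΓ : (P+Q)^(k*n) * (P+Q) = (P+Q)^(k*n+1) := by rw [← pow_succ]
  have e1 : Cn * (φ^(n-1) * dφ) = Cm * ((P+Q)^(k*n) * (dP + dQ)) := by
    have h := congrArg (d⁄dX ℚ) hφ
    rw [Derivation.leibniz_pow, Derivation.leibniz_pow] at h
    simp only [smul_eq_mul, nsmul_eq_mul, Nat.add_sub_cancel, map_add, ← hdad, ← hdPd,
      ← hdQd, ← hdφd] at h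
    rw [hCncast, hCmcast] at h
    exact h
  have e2 : (P+Q)^(k*n) * (Cn * ((P+Q) * dφ)) = (P+Q)^(k*n) * (Cm * ((dP + dQ) * φ)) := by
    linear_combination φ * e1 + (Cn*dφ)*hΓ - (Cn*dφ)*hΦ - (Cn*dφ)*hφ
  have h6x : Cn * ((P+Q) * dφ) = Cm * ((dP + dQ) * φ) :=
    mul_left_cancel₀ (pow_ne_zero (k*n) hGne) e2
  -- φ = G^2 ψ
  have hmulkn : (k-2)*n + 2*n = k*n := by
    rw [Nat.sub_mul, Nat.sub_add_cancel (Nat.mul_le_mul_right n hk)]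
  have hexp : ((k-2)*n+1) + 2*n = k*n+1 := by rw [← hmulkn]; ring
  have hgid2 : (ψ * (P+Q)^2)^n = φ^n := by
    rw [mul_pow, hψ, ← pow_mul, ← pow_add, hexp, hφ]
  have h8pre : ψ * (P+Q)^2 = φ := by
    apply RrecAux.pow_eq hn0 _ hφconst hgid2
    rw [map_mul, map_pow, hψconst, hGconst]
    try norm_num
  have h8x : (P+Q)^2 * ψ = φ := by rw [mul_comm] at h8pre; exact h8pre
  have h9x : Ce * Ce = 1 := by
    rw [hCe, ← map_mul, ← pow_add, Even.neg_one_pow ⟨n, rfl⟩, map_one]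
  -- the exactness identity
  set V : PowerSeries ℚ := (Cm+Cm)*aa - (Cm - 1) + (Cm+Cm)*((1-(aa+aa))*(P*gi)) with hVd
  set DV : PowerSeries ℚ := (Cm+Cm)*da + (Cm+Cm)*((1-(aa+aa))*(P*(-gi^2*(dP+dQ)) + gi*dP)
      + (P*gi)*(-(da+da))) with hDVd
  set M : PowerSeries ℚ := Cn*(Ce*((P+Q)^5*(aa*((2*aa-1)*(1-aa))))) with hMd
  have Hbig : M * ((Cm*Cm - 1)*φ - 4*(Cm*(Cm - Cn))*(Ce*((XX^(2*n))*ψ)))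
      = M * (XX*(φ*DV + V*dφ) - (Cm+1)*(φ*V)) := by
    rw [hMd, hVd, hDVd]
    linear_combination (2*φ*P*Q^4*Ce*Cm*Cn + 4*φ*P*Q^4*Ce*Cm*Cn^2 + (-2)*φ*P*Q^4*Ce*Cm^2*Cn + 8*φ*P^2*Q^3*Ce*Cm*Cn + 12*φ*P^2*Q^3*Ce*Cm*Cn^2 + (-4)*φ*P^2*Q^3*Ce*Cm^2*Cn + 12*φ*P^3*Q^2*Ce*Cm*Cn + 12*φ*P^3*Q^2*Ce*Cm*Cn^2 + 8*φ*P^4*Q*Ce*Cm*Cn + 4*φ*P^4*Q*Ce*Cm*Cn^2 + 4*φ*P^4*Q*Ce*Cm^2*Cn + 2*φ*P^5*Ce*Cm*Cn + 2*φ*P^5*Ce*Cm^2*Cn + 2*φ*aa*Q^5*Ce*Cm*Cn + 2*φ*aa*Q^5*Ce*Cm^2*Cn + 2*φ*aa*P*Q^4*Ce*Cm*Cn + (-8)*φ*aa*P*Q^4*Ce*Cm*Cn^2 + 10*φ*aa*P*Q^4*Ce*Cm^2*Cn + (-12)*φ*aa*P^2*Q^3*Ce*Cm*Cn + (-24)*φ*aa*P^2*Q^3*Ce*Cm*Cn^2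 + 12*φ*aa*P^2*Q^3*Ce*Cm^2*Cn + (-28)*φ*aa*P^3*Q^2*Ce*Cm*Cn + (-24)*φ*aa*P^3*Q^2*Ce*Cm*Cn^2 + (-4)*φ*aa*P^3*Q^2*Ce*Cm^2*Cn + (-22)*φ*aa*P^4*Q*Ce*Cm*Cn + (-8)*φ*aa*P^4*Q*Ce*Cm*Cn^2 + (-14)*φ*aa*P^4*Q*Ce*Cm^2*Cn + (-6)*φ*aa*P^5*Ce*Cm*Cn + (-6)*φ*aa*P^5*Ce*Cm^2*Cn + (-4)*φ*aa^2*Q^5*Ce*Cm*Cn + (-4)*φ*aa^2*Q^5*Ce*Cm^2*Cn + (-12)*φ*aa^2*P*Q^4*Ce*Cm*Cn + (-12)*φ*aa^2*P*Q^4*Ce*Cm^2*Cn + (-8)*φ*aa^2*P^2*Q^3*Ce*Cm*Cn + (-8)*φ*aa^2*P^2*Q^3*Ce*Cm^2*Cn + 8*φ*aa^2*P^3*Q^2*Ce*Cm*Cn + 8*φ*aa^2*P^3*Q^2*Ce*Cm^2*Cn + 12*φ*aa^2*P^4*Q*Ce*Cm*Cn + 12*φ*aa^2*P^4*Q*Ce*Cm^2*Cn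 + 4*φ*aa^2*P^5*Ce*Cm*Cn + 4*φ*aa^2*P^5*Ce*Cm^2*Cn) * h1x +
      (-1*φ*XX*P*Q^4*Ce*Cm*Cn + (-2)*φ*XX*P*Q^4*Ce*Cm*Cn^2 + 1*φ*XX*P*Q^4*Ce*Cm^2*Cn + (-4)*φ*XX*P^2*Q^3*Ce*Cm*Cn + (-6)*φ*XX*P^2*Q^3*Ce*Cm*Cn^2 + 2*φ*XX*P^2*Q^3*Ce*Cm^2*Cn + (-6)*φ*XX*P^3*Q^2*Ce*Cm*Cn + (-6)*φ*XX*P^3*Q^2*Ce*Cm*Cn^2 + (-4)*φ*XX*P^4*Q*Ce*Cm*Cn + (-2)*φ*XX*P^4*Q*Ce*Cm*Cn^2 + (-2)*φ*XX*P^4*Q*Ce*Cm^2*Cn + -1*φ*XX*P^5*Ce*Cm*Cn + -1*φ*XX*P^5*Ce*Cm^2*Cn + -1*φ*aa*XX*Q^5*Ce*Cm*Cn + -1*φ*aa*XX*Q^5*Ce*Cm^2*Cn + -1*φ*aa*XX*P*Q^4*Ce*Cm*Cn + 4*φ*aa*XX*P*Q^4*Ce*Cm*Cn^2 + (-5)*φ*aa*XX*P*Q^4*Ce*Cm^2*Cn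 + 6*φ*aa*XX*P^2*Q^3*Ce*Cm*Cn + 12*φ*aa*XX*P^2*Q^3*Ce*Cm*Cn^2 + (-6)*φ*aa*XX*P^2*Q^3*Ce*Cm^2*Cn + 14*φ*aa*XX*P^3*Q^2*Ce*Cm*Cn + 12*φ*aa*XX*P^3*Q^2*Ce*Cm*Cn^2 + 2*φ*aa*XX*P^3*Q^2*Ce*Cm^2*Cn + 11*φ*aa*XX*P^4*Q*Ce*Cm*Cn + 4*φ*aa*XX*P^4*Q*Ce*Cm*Cn^2 + 7*φ*aa*XX*P^4*Q*Ce*Cm^2*Cn + 3*φ*aa*XX*P^5*Ce*Cm*Cn + 3*φ*aa*XX*P^5*Ce*Cm^2*Cn + 2*φ*aa^2*XX*Q^5*Ce*Cm*Cn + 2*φ*aa^2*XX*Q^5*Ce*Cm^2*Cn + 6*φ*aa^2*XX*P*Q^4*Ce*Cm*Cn + 6*φ*aa^2*XX*P*Q^4*Ce*Cm^2*Cn + 4*φ*aa^2*XX*P^2*Q^3*Ce*Cm*Cn + 4*φ*aa^2*XX*P^2*Q^3*Ce*Cm^2*Cn + (-4)*φ*aa^2*XX*P^3*Q^2*Ce*Cm*Cn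 + (-4)*φ*aa^2*XX*P^3*Q^2*Ce*Cm^2*Cn + (-6)*φ*aa^2*XX*P^4*Q*Ce*Cm*Cn + (-6)*φ*aa^2*XX*P^4*Q*Ce*Cm^2*Cn + (-2)*φ*aa^2*XX*P^5*Ce*Cm*Cn + (-2)*φ*aa^2*XX*P^5*Ce*Cm^2*Cn) * h2x +
      (1*φ*XX*Q^4*Ce*Cm + 2*φ*XX*Q^4*Ce*Cm*Cn + -1*φ*XX*Q^4*Ce*Cm^2 + 4*φ*XX*P*Q^3*Ce*Cm + 6*φ*XX*P*Q^3*Ce*Cm*Cn + (-2)*φ*XX*P*Q^3*Ce*Cm^2 + 6*φ*XX*P^2*Q^2*Ce*Cm + 6*φ*XX*P^2*Q^2*Ce*Cm*Cn + 4*φ*XX*P^3*Q*Ce*Cm + 2*φ*XX*P^3*Q*Ce*Cm*Cn + 2*φ*XX*P^3*Q*Ce*Cm^2 + 1*φ*XX*P^4*Ce*Cm + 1*φ*XX*P^4*Ce*Cm^2 + (-3)*φ*aa*XX*Q^4*Ce*Cm + (-10)*φ*aa*XX*Q^4*Ce*Cm*Cn + 5*φ*aa*XX*Q^4*Ce*Cm^2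 + (-12)*φ*aa*XX*P*Q^3*Ce*Cm + (-30)*φ*aa*XX*P*Q^3*Ce*Cm*Cn + 10*φ*aa*XX*P*Q^3*Ce*Cm^2 + (-18)*φ*aa*XX*P^2*Q^2*Ce*Cm + (-30)*φ*aa*XX*P^2*Q^2*Ce*Cm*Cn + (-12)*φ*aa*XX*P^3*Q*Ce*Cm + (-10)*φ*aa*XX*P^3*Q*Ce*Cm*Cn + (-10)*φ*aa*XX*P^3*Q*Ce*Cm^2 + (-3)*φ*aa*XX*P^4*Ce*Cm + (-5)*φ*aa*XX*P^4*Ce*Cm^2 + 2*φ*aa^2*XX*Q^4*Ce*Cm + 16*φ*aa^2*XX*Q^4*Ce*Cm*Cn + (-8)*φ*aa^2*XX*Q^4*Ce*Cm^2 + 8*φ*aa^2*XX*P*Q^3*Ce*Cm + 48*φ*aa^2*XX*P*Q^3*Ce*Cm*Cn + (-16)*φ*aa^2*XX*P*Q^3*Ce*Cm^2 + 12*φ*aa^2*XX*P^2*Q^2*Ce*Cm + 48*φ*aa^2*XX*P^2*Q^2*Ce*Cm*Cn + 8*φ*aa^2*XX*P^3*Q*Ce*Cm + 16*φ*aa^2*XX*P^3*Q*Ce*Cm*Cn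 + 16*φ*aa^2*XX*P^3*Q*Ce*Cm^2 + 2*φ*aa^2*XX*P^4*Ce*Cm + 8*φ*aa^2*XX*P^4*Ce*Cm^2 + (-8)*φ*aa^3*XX*Q^4*Ce*Cm*Cn + 4*φ*aa^3*XX*Q^4*Ce*Cm^2 + (-24)*φ*aa^3*XX*P*Q^3*Ce*Cm*Cn + 8*φ*aa^3*XX*P*Q^3*Ce*Cm^2 + (-24)*φ*aa^3*XX*P^2*Q^2*Ce*Cm*Cn + (-8)*φ*aa^3*XX*P^3*Q*Ce*Cm*Cn + (-8)*φ*aa^3*XX*P^3*Q*Ce*Cm^2 + (-4)*φ*aa^3*XX*P^4*Ce*Cm^2) * h3x +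
      (1*φ*aa*XX*Q^4*Ce*Cm + -1*φ*aa*XX*Q^4*Ce*Cm^2 + 4*φ*aa*XX*P*Q^3*Ce*Cm + (-2)*φ*aa*XX*P*Q^3*Ce*Cm*Cn + (-2)*φ*aa*XX*P*Q^3*Ce*Cm^2 + 6*φ*aa*XX*P^2*Q^2*Ce*Cm + (-6)*φ*aa*XX*P^2*Q^2*Ce*Cm*Cn + 4*φ*aa*XX*P^3*Q*Ce*Cm + (-6)*φ*aa*XX*P^3*Q*Ce*Cm*Cn + 2*φ*aa*XX*P^3*Q*Ce*Cm^2 + 1*φ*aa*XX*P^4*Ce*Cm + (-2)*φ*aa*XX*P^4*Ce*Cm*Cn + 1*φ*aa*XX*P^4*Ce*Cm^2 + (-2)*φ*aa^2*XX*Q^4*Ce*Cm + 4*φ*aa^2*XX*Q^4*Ce*Cm^2 + (-8)*φ*aa^2*XX*P*Q^3*Ce*Cm + 8*φ*aa^2*XX*P*Q^3*Ce*Cm*Cn + 8*φ*aa^2*XX*P*Q^3*Ce*Cm^2 + (-12)*φ*aa^2*XX*P^2*Q^2*Ce*Cm + 24*φ*aa^2*XX*P^2*Q^2*Ce*Cm*Cn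 + (-8)*φ*aa^2*XX*P^3*Q*Ce*Cm + 24*φ*aa^2*XX*P^3*Q*Ce*Cm*Cn + (-8)*φ*aa^2*XX*P^3*Q*Ce*Cm^2 + (-2)*φ*aa^2*XX*P^4*Ce*Cm + 8*φ*aa^2*XX*P^4*Ce*Cm*Cn + (-4)*φ*aa^2*XX*P^4*Ce*Cm^2 + (-4)*φ*aa^3*XX*Q^4*Ce*Cm^2 + (-8)*φ*aa^3*XX*P*Q^3*Ce*Cm*Cn + (-8)*φ*aa^3*XX*P*Q^3*Ce*Cm^2 + (-24)*φ*aa^3*XX*P^2*Q^2*Ce*Cm*Cn + (-24)*φ*aa^3*XX*P^3*Q*Ce*Cm*Cn + 8*φ*aa^3*XX*P^3*Q*Ce*Cm^2 + (-8)*φ*aa^3*XX*P^4*Ce*Cm*Cn + 4*φ*aa^3*XX*P^4*Ce*Cm^2) * h4x +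
      (4*φ*aa*Q^3*Ce*Cm*Cn^2 + (-4)*φ*aa*Q^3*Ce*Cm^2*Cn + 12*φ*aa*P*Q^2*Ce*Cm*Cn^2 + (-12)*φ*aa*P*Q^2*Ce*Cm^2*Cn + 12*φ*aa*P^2*Q*Ce*Cm*Cn^2 + (-12)*φ*aa*P^2*Q*Ce*Cm^2*Cn + 4*φ*aa*P^3*Ce*Cm*Cn^2 + (-4)*φ*aa*P^3*Ce*Cm^2*Cn + (-12)*φ*aa^2*Q^3*Ce*Cm*Cn^2 + 12*φ*aa^2*Q^3*Ce*Cm^2*Cn + (-36)*φ*aa^2*P*Q^2*Ce*Cm*Cn^2 + 36*φ*aa^2*P*Q^2*Ce*Cm^2*Cn + (-36)*φ*aa^2*P^2*Q*Ce*Cm*Cn^2 + 36*φ*aa^2*P^2*Q*Ce*Cm^2*Cn + (-12)*φ*aa^2*P^3*Ce*Cm*Cn^2 + 12*φ*aa^2*P^3*Ce*Cm^2*Cn + 8*φ*aa^3*Q^3*Ce*Cm*Cn^2 + (-8)*φ*aa^3*Q^3*Ce*Cm^2*Cn + 24*φ*aa^3*P*Q^2*Ce*Cm*Cn^2 + (-24)*φ*aa^3*P*Q^2*Ce*Cm^2*Cn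 + 24*φ*aa^3*P^2*Q*Ce*Cm*Cn^2 + (-24)*φ*aa^3*P^2*Q*Ce*Cm^2*Cn + 8*φ*aa^3*P^3*Ce*Cm*Cn^2 + (-8)*φ*aa^3*P^3*Ce*Cm^2*Cn) * h5x +
      (1*aa*XX*Q^4*Ce + -1*aa*XX*Q^4*Ce*Cm + 4*aa*XX*P*Q^3*Ce + (-2)*aa*XX*P*Q^3*Ce*Cm + 6*aa*XX*P^2*Q^2*Ce + 4*aa*XX*P^3*Q*Ce + 2*aa*XX*P^3*Q*Ce*Cm + 1*aa*XX*P^4*Ce + 1*aa*XX*P^4*Ce*Cm + (-3)*aa^2*XX*Q^4*Ce + 5*aa^2*XX*Q^4*Ce*Cm + (-12)*aa^2*XX*P*Q^3*Ce + 10*aa^2*XX*P*Q^3*Ce*Cm + (-18)*aa^2*XX*P^2*Q^2*Ce + (-12)*aa^2*XX*P^3*Q*Ce + (-10)*aa^2*XX*P^3*Q*Ce*Cm + (-3)*aa^2*XX*P^4*Ce + (-5)*aa^2*XX*P^4*Ce*Cm + 2*aa^3*XX*Q^4*Ce + (-8)*aa^3*XX*Q^4*Ce*Cm + 8*aa^3*XX*P*Q^3*Ce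 + (-16)*aa^3*XX*P*Q^3*Ce*Cm + 12*aa^3*XX*P^2*Q^2*Ce + 8*aa^3*XX*P^3*Q*Ce + 16*aa^3*XX*P^3*Q*Ce*Cm + 2*aa^3*XX*P^4*Ce + 8*aa^3*XX*P^4*Ce*Cm + 4*aa^4*XX*Q^4*Ce*Cm + 8*aa^4*XX*P*Q^3*Ce*Cm + (-8)*aa^4*XX*P^3*Q*Ce*Cm + (-4)*aa^4*XX*P^4*Ce*Cm) * h6x +
      (2*dφ*aa*XX*P*Q^4*Ce*Cm*Cn + 8*dφ*aa*XX*P^2*Q^3*Ce*Cm*Cn + 12*dφ*aa*XX*P^3*Q^2*Ce*Cm*Cn + 8*dφ*aa*XX*P^4*Q*Ce*Cm*Cn + 2*dφ*aa*XX*P^5*Ce*Cm*Cn + (-10)*dφ*aa^2*XX*P*Q^4*Ce*Cm*Cn + (-40)*dφ*aa^2*XX*P^2*Q^3*Ce*Cm*Cn + (-60)*dφ*aa^2*XX*P^3*Q^2*Ce*Cm*Cn + (-40)*dφ*aa^2*XX*P^4*Q*Ce*Cm*Cn + (-10)*dφ*aa^2*XX*P^5*Ce*Cm*Cn + 16*dφ*aa^3*XX*P*Q^4*Ce*Cm*Cn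 + 64*dφ*aa^3*XX*P^2*Q^3*Ce*Cm*Cn + 96*dφ*aa^3*XX*P^3*Q^2*Ce*Cm*Cn + 64*dφ*aa^3*XX*P^4*Q*Ce*Cm*Cn + 16*dφ*aa^3*XX*P^5*Ce*Cm*Cn + (-8)*dφ*aa^4*XX*P*Q^4*Ce*Cm*Cn + (-32)*dφ*aa^4*XX*P^2*Q^3*Ce*Cm*Cn + (-48)*dφ*aa^4*XX*P^3*Q^2*Ce*Cm*Cn + (-32)*dφ*aa^4*XX*P^4*Q*Ce*Cm*Cn + (-8)*dφ*aa^4*XX*P^5*Ce*Cm*Cn + (-2)*φ*aa*P*Q^4*Ce*Cm*Cn + (-2)*φ*aa*P*Q^4*Ce*Cm^2*Cn + (-8)*φ*aa*P^2*Q^3*Ce*Cm*Cn + (-8)*φ*aa*P^2*Q^3*Ce*Cm^2*Cn + (-12)*φ*aa*P^3*Q^2*Ce*Cm*Cn + (-12)*φ*aa*P^3*Q^2*Ce*Cm^2*Cn + (-8)*φ*aa*P^4*Q*Ce*Cm*Cn + (-8)*φ*aa*P^4*Q*Ce*Cm^2*Cn + (-2)*φ*aa*P^5*Ce*Cm*Cn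 + (-2)*φ*aa*P^5*Ce*Cm^2*Cn + 2*φ*aa*XX*dP*Q^4*Ce*Cm*Cn + (-2)*φ*aa*XX*P*Q^3*dQ*Ce*Cm*Cn + (-2)*φ*aa*XX*P*Q^4*dQ*gi*Ce*Cm*Cn + 6*φ*aa*XX*P*dP*Q^3*Ce*Cm*Cn + (-2)*φ*aa*XX*P*dP*Q^4*gi*Ce*Cm*Cn + (-6)*φ*aa*XX*P^2*Q^2*dQ*Ce*Cm*Cn + (-8)*φ*aa*XX*P^2*Q^3*dQ*gi*Ce*Cm*Cn + 6*φ*aa*XX*P^2*dP*Q^2*Ce*Cm*Cn + (-8)*φ*aa*XX*P^2*dP*Q^3*gi*Ce*Cm*Cn + (-6)*φ*aa*XX*P^3*Q*dQ*Ce*Cm*Cn + (-12)*φ*aa*XX*P^3*Q^2*dQ*gi*Ce*Cm*Cn + 2*φ*aa*XX*P^3*dP*Q*Ce*Cm*Cn + (-12)*φ*aa*XX*P^3*dP*Q^2*gi*Ce*Cm*Cn + (-2)*φ*aa*XX*P^4*dQ*Ce*Cm*Cn + (-8)*φ*aa*XX*P^4*Q*dQ*gi*Ce*Cm*Cn + (-8)*φ*aa*XX*P^4*dP*Q*gi*Ce*Cm*Cn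 + (-2)*φ*aa*XX*P^5*dQ*gi*Ce*Cm*Cn + (-2)*φ*aa*XX*P^5*dP*gi*Ce*Cm*Cn + (-4)*φ*aa*da*XX*P*Q^4*Ce*Cm*Cn + (-16)*φ*aa*da*XX*P^2*Q^3*Ce*Cm*Cn + (-24)*φ*aa*da*XX*P^3*Q^2*Ce*Cm*Cn + (-16)*φ*aa*da*XX*P^4*Q*Ce*Cm*Cn + (-4)*φ*aa*da*XX*P^5*Ce*Cm*Cn + 10*φ*aa^2*P*Q^4*Ce*Cm*Cn + 10*φ*aa^2*P*Q^4*Ce*Cm^2*Cn + 40*φ*aa^2*P^2*Q^3*Ce*Cm*Cn + 40*φ*aa^2*P^2*Q^3*Ce*Cm^2*Cn + 60*φ*aa^2*P^3*Q^2*Ce*Cm*Cn + 60*φ*aa^2*P^3*Q^2*Ce*Cm^2*Cn + 40*φ*aa^2*P^4*Q*Ce*Cm*Cn + 40*φ*aa^2*P^4*Q*Ce*Cm^2*Cn + 10*φ*aa^2*P^5*Ce*Cm*Cn + 10*φ*aa^2*P^5*Ce*Cm^2*Cn + (-10)*φ*aa^2*XX*dP*Q^4*Ce*Cm*Cn + 10*φ*aa^2*XX*P*Q^3*dQ*Ce*Cm*Cn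 + 10*φ*aa^2*XX*P*Q^4*dQ*gi*Ce*Cm*Cn + (-30)*φ*aa^2*XX*P*dP*Q^3*Ce*Cm*Cn + 10*φ*aa^2*XX*P*dP*Q^4*gi*Ce*Cm*Cn + 30*φ*aa^2*XX*P^2*Q^2*dQ*Ce*Cm*Cn + 40*φ*aa^2*XX*P^2*Q^3*dQ*gi*Ce*Cm*Cn + (-30)*φ*aa^2*XX*P^2*dP*Q^2*Ce*Cm*Cn + 40*φ*aa^2*XX*P^2*dP*Q^3*gi*Ce*Cm*Cn + 30*φ*aa^2*XX*P^3*Q*dQ*Ce*Cm*Cn + 60*φ*aa^2*XX*P^3*Q^2*dQ*gi*Ce*Cm*Cn + (-10)*φ*aa^2*XX*P^3*dP*Q*Ce*Cm*Cn + 60*φ*aa^2*XX*P^3*dP*Q^2*gi*Ce*Cm*Cn + 10*φ*aa^2*XX*P^4*dQ*Ce*Cm*Cn + 40*φ*aa^2*XX*P^4*Q*dQ*gi*Ce*Cm*Cn + 40*φ*aa^2*XX*P^4*dP*Q*gi*Ce*Cm*Cn + 10*φ*aa^2*XX*P^5*dQ*gi*Ce*Cm*Cn + 10*φ*aa^2*XX*P^5*dP*gi*Ce*Cm*Cn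 + 12*φ*aa^2*da*XX*P*Q^4*Ce*Cm*Cn + 48*φ*aa^2*da*XX*P^2*Q^3*Ce*Cm*Cn + 72*φ*aa^2*da*XX*P^3*Q^2*Ce*Cm*Cn + 48*φ*aa^2*da*XX*P^4*Q*Ce*Cm*Cn + 12*φ*aa^2*da*XX*P^5*Ce*Cm*Cn + (-16)*φ*aa^3*P*Q^4*Ce*Cm*Cn + (-16)*φ*aa^3*P*Q^4*Ce*Cm^2*Cn + (-64)*φ*aa^3*P^2*Q^3*Ce*Cm*Cn + (-64)*φ*aa^3*P^2*Q^3*Ce*Cm^2*Cn + (-96)*φ*aa^3*P^3*Q^2*Ce*Cm*Cn + (-96)*φ*aa^3*P^3*Q^2*Ce*Cm^2*Cn + (-64)*φ*aa^3*P^4*Q*Ce*Cm*Cn + (-64)*φ*aa^3*P^4*Q*Ce*Cm^2*Cn + (-16)*φ*aa^3*P^5*Ce*Cm*Cn + (-16)*φ*aa^3*P^5*Ce*Cm^2*Cn + 16*φ*aa^3*XX*dP*Q^4*Ce*Cm*Cn + (-16)*φ*aa^3*XX*P*Q^3*dQ*Ce*Cm*Cn + (-16)*φ*aa^3*XX*P*Q^4*dQ*gi*Ce*Cm*Cn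 + 48*φ*aa^3*XX*P*dP*Q^3*Ce*Cm*Cn + (-16)*φ*aa^3*XX*P*dP*Q^4*gi*Ce*Cm*Cn + (-48)*φ*aa^3*XX*P^2*Q^2*dQ*Ce*Cm*Cn + (-64)*φ*aa^3*XX*P^2*Q^3*dQ*gi*Ce*Cm*Cn + 48*φ*aa^3*XX*P^2*dP*Q^2*Ce*Cm*Cn + (-64)*φ*aa^3*XX*P^2*dP*Q^3*gi*Ce*Cm*Cn + (-48)*φ*aa^3*XX*P^3*Q*dQ*Ce*Cm*Cn + (-96)*φ*aa^3*XX*P^3*Q^2*dQ*gi*Ce*Cm*Cn + 16*φ*aa^3*XX*P^3*dP*Q*Ce*Cm*Cn + (-96)*φ*aa^3*XX*P^3*dP*Q^2*gi*Ce*Cm*Cn + (-16)*φ*aa^3*XX*P^4*dQ*Ce*Cm*Cn + (-64)*φ*aa^3*XX*P^4*Q*dQ*gi*Ce*Cm*Cn + (-64)*φ*aa^3*XX*P^4*dP*Q*gi*Ce*Cm*Cn + (-16)*φ*aa^3*XX*P^5*dQ*gi*Ce*Cm*Cn + (-16)*φ*aa^3*XX*P^5*dP*gi*Ce*Cm*Cn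 + (-8)*φ*aa^3*da*XX*P*Q^4*Ce*Cm*Cn + (-32)*φ*aa^3*da*XX*P^2*Q^3*Ce*Cm*Cn + (-48)*φ*aa^3*da*XX*P^3*Q^2*Ce*Cm*Cn + (-32)*φ*aa^3*da*XX*P^4*Q*Ce*Cm*Cn + (-8)*φ*aa^3*da*XX*P^5*Ce*Cm*Cn + 8*φ*aa^4*P*Q^4*Ce*Cm*Cn + 8*φ*aa^4*P*Q^4*Ce*Cm^2*Cn + 32*φ*aa^4*P^2*Q^3*Ce*Cm*Cn + 32*φ*aa^4*P^2*Q^3*Ce*Cm^2*Cn + 48*φ*aa^4*P^3*Q^2*Ce*Cm*Cn + 48*φ*aa^4*P^3*Q^2*Ce*Cm^2*Cn + 32*φ*aa^4*P^4*Q*Ce*Cm*Cn + 32*φ*aa^4*P^4*Q*Ce*Cm^2*Cn + 8*φ*aa^4*P^5*Ce*Cm*Cn + 8*φ*aa^4*P^5*Ce*Cm^2*Cn + (-8)*φ*aa^4*XX*dP*Q^4*Ce*Cm*Cn + 8*φ*aa^4*XX*P*Q^3*dQ*Ce*Cm*Cn + 8*φ*aa^4*XX*P*Q^4*dQ*gi*Ce*Cm*Cn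 + (-24)*φ*aa^4*XX*P*dP*Q^3*Ce*Cm*Cn + 8*φ*aa^4*XX*P*dP*Q^4*gi*Ce*Cm*Cn + 24*φ*aa^4*XX*P^2*Q^2*dQ*Ce*Cm*Cn + 32*φ*aa^4*XX*P^2*Q^3*dQ*gi*Ce*Cm*Cn + (-24)*φ*aa^4*XX*P^2*dP*Q^2*Ce*Cm*Cn + 32*φ*aa^4*XX*P^2*dP*Q^3*gi*Ce*Cm*Cn + 24*φ*aa^4*XX*P^3*Q*dQ*Ce*Cm*Cn + 48*φ*aa^4*XX*P^3*Q^2*dQ*gi*Ce*Cm*Cn + (-8)*φ*aa^4*XX*P^3*dP*Q*Ce*Cm*Cn + 48*φ*aa^4*XX*P^3*dP*Q^2*gi*Ce*Cm*Cn + 8*φ*aa^4*XX*P^4*dQ*Ce*Cm*Cn + 32*φ*aa^4*XX*P^4*Q*dQ*gi*Ce*Cm*Cn + 32*φ*aa^4*XX*P^4*dP*Q*gi*Ce*Cm*Cn + 8*φ*aa^4*XX*P^5*dQ*gi*Ce*Cm*Cn + 8*φ*aa^4*XX*P^5*dP*gi*Ce*Cm*Cn) * h7x +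
      ((-4)*aa*Q^3*(XX^(2*n))*Ce^2*Cm*Cn^2 + 4*aa*Q^3*(XX^(2*n))*Ce^2*Cm^2*Cn + (-12)*aa*P*Q^2*(XX^(2*n))*Ce^2*Cm*Cn^2 + 12*aa*P*Q^2*(XX^(2*n))*Ce^2*Cm^2*Cn + (-12)*aa*P^2*Q*(XX^(2*n))*Ce^2*Cm*Cn^2 + 12*aa*P^2*Q*(XX^(2*n))*Ce^2*Cm^2*Cn + (-4)*aa*P^3*(XX^(2*n))*Ce^2*Cm*Cn^2 + 4*aa*P^3*(XX^(2*n))*Ce^2*Cm^2*Cn + 12*aa^2*Q^3*(XX^(2*n))*Ce^2*Cm*Cn^2 + (-12)*aa^2*Q^3*(XX^(2*n))*Ce^2*Cm^2*Cn + 36*aa^2*P*Q^2*(XX^(2*n))*Ce^2*Cm*Cn^2 + (-36)*aa^2*P*Q^2*(XX^(2*n))*Ce^2*Cm^2*Cn + 36*aa^2*P^2*Q*(XX^(2*n))*Ce^2*Cm*Cn^2 + (-36)*aa^2*P^2*Q*(XX^(2*n))*Ce^2*Cm^2*Cn + 12*aa^2*P^3*(XX^(2*n))*Ce^2*Cm*Cn^2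 + (-12)*aa^2*P^3*(XX^(2*n))*Ce^2*Cm^2*Cn + (-8)*aa^3*Q^3*(XX^(2*n))*Ce^2*Cm*Cn^2 + 8*aa^3*Q^3*(XX^(2*n))*Ce^2*Cm^2*Cn + (-24)*aa^3*P*Q^2*(XX^(2*n))*Ce^2*Cm*Cn^2 + 24*aa^3*P*Q^2*(XX^(2*n))*Ce^2*Cm^2*Cn + (-24)*aa^3*P^2*Q*(XX^(2*n))*Ce^2*Cm*Cn^2 + 24*aa^3*P^2*Q*(XX^(2*n))*Ce^2*Cm^2*Cn + (-8)*aa^3*P^3*(XX^(2*n))*Ce^2*Cm*Cn^2 + 8*aa^3*P^3*(XX^(2*n))*Ce^2*Cm^2*Cn) * h8x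
  have hMne : M ≠ 0 := by
    rw [hMd]
    exact mul_ne_zero hCn_ne (mul_ne_zero hCe_ne (mul_ne_zero (pow_ne_zero 5 hGne)
      (mul_ne_zero haane (mul_ne_zero h2am1ne h1aane))))
  have Hmain : (Cm*Cm - 1)*φ - 4*(Cm*(Cm - Cn))*(Ce*((XX^(2*n))*ψ))
      = XX*(φ*DV + V*dφ) - (Cm+1)*(φ*V) := mul_left_cancel₀ hMne Hbig
  -- identify RHS with X * D U - (Cm+1) U
  have hDV2 : d⁄dX ℚ V = DV := by
    have hdCm : d⁄dX ℚ Cm = 0 := by rw [hCm]; exact PowerSeries.derivative_C (r := _)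
    rw [hVd, hDVd]
    simp only [map_add, map_sub, Derivation.leibniz, hdCm,
      Derivation.map_one_eq_zero, smul_eq_mul, hdgi, ← hdad, ← hdPd, ← hdQd]
    ring
  have hDU : d⁄dX ℚ (φ * V) = φ * DV + V * dφ := by
    rw [Derivation.leibniz, smul_eq_mul, smul_eq_mul, hDV2, hdφd]
  have hfin : (Cm*Cm - 1)*φ - 4*(Cm*(Cm - Cn))*(Ce*((XX^(2*n))*ψ))
      = XX * d⁄dX ℚ (φ * V) - (Cm+1)*(φ*V) := by
    rw [hDU]; exact Hmain
  -- coefficient extraction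
  have hidx : k*n+2 = ((k-2)*n+2) + 2*n := by rw [← hmulkn]; ring
  have hL2 : (Cm*Cm - 1)*φ - 4*(Cm*(Cm - Cn))*(Ce*((XX^(2*n))*ψ))
      = PowerSeries.C ((((k*n+1 : ℕ)):ℚ)*(((k*n+1 : ℕ)):ℚ) - 1) * φ
        - PowerSeries.C (4*((((k*n+1 : ℕ)):ℚ)*((((k*n+1 : ℕ)):ℚ) - (n:ℚ)))*((-1:ℚ)^n))
            * ((XX^(2*n))*ψ) := by
    rw [hCm, hCnd, hCe]
    simp only [map_sub, map_mul, map_one, map_ofNat, map_pow, map_neg]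
    ring
  have hR2 : XX * d⁄dX ℚ (φ * V) - (Cm+1)*(φ*V)
      = XX * d⁄dX ℚ (φ * V) - PowerSeries.C ((((k*n+1 : ℕ)):ℚ)+1)*(φ*V) := by
    rw [hCm, map_add, map_one]
  have hco := congrArg (PowerSeries.coeff (k*n+2)) ((hL2.symm.trans hfin).trans hR2)
  have hAψ : PowerSeries.coeff (k*n+2) ((XX^(2*n))*ψ) = PowerSeries.coeff ((k-2)*n+2) ψ := by
    rw [hXX, hidx]
    exact PowerSeries.coeff_X_pow_mul ψ (2*n) ((k-2)*n+2)
  have hBU : PowerSeries.coeff (k*n+2) (XX * d⁄dX ℚ (φ * V))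
      = PowerSeries.coeff (k*n+2) (φ * V) * ((((k*n+1 : ℕ)):ℚ)+1) := by
    rw [hXX, show k*n+2 = (k*n+1)+1 from rfl, PowerSeries.coeff_succ_X_mul,
      PowerSeries.coeff_derivative]
    try push_cast
    try ring
  simp only [map_sub, PowerSeries.coeff_C_mul, PowerSeries.coeff_one, sub_mul, one_mul,
    hAψ, hBU] at hco
  push_cast at hco ⊢
  linear_combination hco
end

section
/- Fix an integer n ≥ 3 and let u, v : ℝ × ℝ → ℝ be continuously differentiable functions of (x,t). Define the Lax function L(x,t,p) = (1/n)·A_n(−v(x,t), n^{1/n}·p) + u(x,t) and the truncated fractional power P(x,t,p) = n^{−(1+1/n)}·A_{n+1}(−v(x,t), n^{1/n}·p) + ((n+1)/n)·u(x,t)·p, which are polynomials in p with coefficients depending on (x,t). Then the standard Lax equation ∂L/∂t = (n/(n+1))·(∂P/∂x·∂L/∂p − ∂P/∂p·∂L/∂x) holds at every (x,t) and every p ∈ ℝ if and only if the polytropic gas equations with exponent γ = n+1 hold, namely ∂u/∂t + u·∂u/∂x + v^{n−1}·∂v/∂x = 0 and ∂v/∂t + ∂(u·v)/∂x = 0 at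 every (x,t). -/
/-- The bivariate real function
`A_n(w,π) = Σ_{k=0}^{⌊n/2⌋} (n/(n−k))·binom(n−k, k)·w^k·π^{n−2k}`. -/
noncomputable def A (n : ℕ) (w π : ℝ) : ℝ :=
  ∑ k ∈ Finset.range (n / 2 + 1),
    ((n : ℝ) / ((n : ℝ) - (k : ℝ)) * (((n - k).choose k : ℕ) : ℝ)) *
      w ^ k * π ^ (n - 2 * k)

/-- The Lax function `L(x,t,p) = (1/n)·A_n(−v(x,t), n^{1/n}·p) + u(x,t)`. -/
noncomputable def L (n : ℕ) (u v : ℝ × ℝ → ℝ) (x t p : ℝ) : ℝ :=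
  (1 / (n : ℝ)) * A n (-(v (x, t))) ((n : ℝ) ^ ((1 : ℝ) / (n : ℝ)) * p) + u (x, t)

/-- The truncated fractional power
`P(x,t,p) = n^{−(1+1/n)}·A_{n+1}(−v(x,t), n^{1/n}·p) + ((n+1)/n)·u(x,t)·p`,
which is `(L^{1+1/n})₊`. -/
noncomputable def P (n : ℕ) (u v : ℝ × ℝ → ℝ) (x t p : ℝ) : ℝ :=
  (n : ℝ) ^ (-(1 + (1 : ℝ) / (n : ℝ))) *
      A (n + 1) (-(v (x, t))) ((n : ℝ) ^ ((1 : ℝ) / (n : ℝ)) * p)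
    + ((n : ℝ) + 1) / (n : ℝ) * u (x, t) * p


open Finset

noncomputable def Bf (m : ℕ) (w q : ℝ) : ℝ :=
  ∑ k ∈ Finset.range (m + 1), (((m - k).choose k : ℕ) : ℝ) * w ^ k * q ^ (m - 2 * k)

lemma Bf_rec (m : ℕ) (w q : ℝ) :
    Bf (m + 2) w q = q * Bf (m + 1) w q + w * Bf m w q := by
  unfold Bf
  rw [Finset.mul_sum, Finset.mul_sum]
  rw [Finset.sum_range_succ' (fun k => ((((m+2) - k).choose k : ℕ) : ℝ) * w ^ k * q ^ ((m+2) - 2 * k)) (m+2)]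
  rw [Finset.sum_range_succ' (fun k => q * (((((m+1) - k).choose k : ℕ) : ℝ) * w ^ k * q ^ ((m+1) - 2 * k))) (m+1)]
  rw [Finset.sum_range_succ (fun k => ((((m+2) - (k+1)).choose (k+1) : ℕ) : ℝ) * w ^ (k+1) * q ^ ((m+2) - 2 * (k+1))) (m+1)]
  have hlast : ((m + 2 - (m + 1 + 1)).choose (m + 1 + 1) : ℕ) = 0 := by
    apply Nat.choose_eq_zero_of_lt; omega
  have h0 : ∑ k ∈ Finset.range (m+1),
      ((((m+2) - (k+1)).choose (k+1) : ℕ) : ℝ) * w ^ (k+1) * q ^ ((m+2) - 2 * (k+1))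
      = ∑ k ∈ Finset.range (m+1),
        (q * (((((m+1) - (k+1)).choose (k+1) : ℕ) : ℝ) * w ^ (k+1) * q ^ ((m+1) - 2 * (k+1)))
         + w * ((((m - k).choose k : ℕ) : ℝ) * w ^ k * q ^ (m - 2 * k))) := by
    apply Finset.sum_congr rfl
    intro k hk
    simp only [Finset.mem_range] at hk
    by_cases hA : 2*k + 1 ≤ m
    · have e1 : m + 2 - 2 * (k+1) = m - 2*k := by omega
      have e2 : m + 2 - (k+1) = (m - k) + 1 := by omega
      have e3 : m + 1 - (k+1) = m - k := by omega
      have e4 : m - 2*k = (m + 1 - 2*(k+1)) + 1 := by omega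
      rw [e1, e2, e3, Nat.choose_succ_succ, e4, pow_succ]
      push_cast
      ring
    · by_cases hB : 2*k = m
      · have e1 : m + 2 - 2 * (k+1) = 0 := by omega
        have e2 : m + 2 - (k+1) = k + 1 := by omega
        have e3 : m + 1 - (k+1) = k := by omega
        have e4 : m - 2*k = 0 := by omega
        have e5 : m - k = k := by omega
        rw [e1, e2, e3, e4, e5, Nat.choose_self, Nat.choose_eq_zero_of_lt (by omega),
          Nat.choose_self]
        push_cast
        ring
      · have e2 : ((m + 2 - (k+1)).choose (k+1)) = 0 := by
          apply Nat.choose_eq_zero_of_lt; omega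
        have e3 : ((m + 1 - (k+1)).choose (k+1)) = 0 := by
          apply Nat.choose_eq_zero_of_lt; omega
        have e5 : ((m - k).choose k) = 0 := by
          apply Nat.choose_eq_zero_of_lt; omega
        rw [e2, e3, e5]
        push_cast
        ring
  rw [h0, Finset.sum_add_distrib]
  simp only [hlast, Nat.choose_zero_right, Nat.sub_zero, Nat.mul_zero, Nat.cast_zero,
    Nat.cast_one, zero_mul, mul_zero, add_zero, zero_add, pow_zero, one_mul, mul_one]
  rw [pow_succ' q (m+1)]; ring

lemma Bf_zero (w q : ℝ) : Bf 0 w q = 1 := by simp [Bf]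

lemma Bf_one (w q : ℝ) : Bf 1 w q = q := by
  simp [Bf, Finset.sum_range_succ]

lemma Bf_catalan (m : ℕ) (w q : ℝ) :
    Bf (m + 2) w q * Bf m w q - (Bf (m + 1) w q) ^ 2 = -(-w) ^ (m + 1) := by
  induction m with
  | zero => rw [Bf_rec, Bf_zero, Bf_one]; ring
  | succ k ih =>
    rw [Bf_rec (k+1) w q, Bf_rec k w q]
    rw [Bf_rec k w q] at ih
    linear_combination (-w) * ih

lemma A_eq (n : ℕ) (w π : ℝ) :
    A n w π = ∑ k ∈ Finset.range (n + 1),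
      ((n : ℝ) / ((n : ℝ) - (k : ℝ)) * (((n - k).choose k : ℕ) : ℝ)) *
        w ^ k * π ^ (n - 2 * k) := by
  unfold A
  apply Finset.sum_subset
  · intro k hk
    simp only [Finset.mem_range] at *
    omega
  · intro k hk hk'
    simp only [Finset.mem_range] at *
    have : (n - k).choose k = 0 := by apply Nat.choose_eq_zero_of_lt; omega
    rw [this]
    simp

lemma hasDerivAt_A_pi (n : ℕ) (hn : 1 ≤ n) (w π : ℝ) :
    HasDerivAt (fun y => A n w y) ((n : ℝ) * Bf (n - 1) w π) π := by
  have hfun : (fun y => A n w y) = fun y => ∑ k ∈ Finset.range (n + 1),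
      ((n : ℝ) / ((n : ℝ) - (k : ℝ)) * (((n - k).choose k : ℕ) : ℝ)) *
        w ^ k * y ^ (n - 2 * k) := funext (fun y => A_eq n w y)
  rw [hfun]
  have hsum : HasDerivAt (fun y : ℝ => ∑ k ∈ Finset.range (n + 1),
      ((n : ℝ) / ((n : ℝ) - (k : ℝ)) * (((n - k).choose k : ℕ) : ℝ)) *
        w ^ k * y ^ (n - 2 * k))
      (∑ k ∈ Finset.range (n + 1),
        ((n : ℝ) / ((n : ℝ) - (k : ℝ)) * (((n - k).choose k : ℕ) : ℝ)) * w ^ k *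
          (((n - 2 * k : ℕ) : ℝ) * π ^ (n - 2 * k - 1))) π := by
    apply HasDerivAt.fun_sum
    intro k hk
    exact (hasDerivAt_pow (n - 2 * k) π).const_mul
      (((n : ℝ) / ((n : ℝ) - (k : ℝ)) * (((n - k).choose k : ℕ) : ℝ)) * w ^ k)
  convert hsum using 1
  unfold Bf
  rw [Finset.mul_sum]
  have hr : n - 1 + 1 = n := by omega
  rw [hr]
  rw [Finset.sum_range_succ (fun k => ((n : ℝ) / ((n : ℝ) - (k : ℝ)) *
      (((n - k).choose k : ℕ) : ℝ)) * w ^ k * (((n - 2 * k : ℕ) : ℝ) * π ^ (n - 2 * k - 1))) n]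
  have hz : ((n - 2 * n : ℕ) : ℝ) = 0 := by
    have h : n - 2 * n = 0 := by omega
    rw [h]; simp
  simp only [hz, zero_mul, mul_zero, add_zero]
  apply Finset.sum_congr rfl
  intro k hk
  simp only [Finset.mem_range] at hk
  by_cases hA : 2 * k + 1 ≤ n
  · have e1 : n - 2 * k - 1 = n - 1 - 2 * k := by omega
    have e3 : n - 1 - k = n - k - 1 := by omega
    have e2 : ((n - 2 * k : ℕ) : ℝ) = (n : ℝ) - 2 * (k : ℝ) := by
      push_cast [Nat.cast_sub (show 2 * k ≤ n by omega)]; ring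
    have hnk : ((n : ℝ) - (k : ℝ)) ≠ 0 := by
      have hkn : (k : ℝ) < (n : ℝ) := by exact_mod_cast (show k < n by omega)
      linarith
    have hnat : (n - 2 * k) * ((n - k).choose k) = (n - k) * ((n - k - 1).choose k) := by
      have h := Nat.choose_mul_succ_eq (n - k - 1) k
      rw [show n - k - 1 + 1 = n - k by omega] at h
      rw [show n - k - k = n - 2 * k by omega] at h
      calc (n - 2 * k) * ((n - k).choose k) = ((n - k).choose k) * (n - 2 * k) := by ring
        _ = ((n - k - 1).choose k) * (n - k) := h.symm
        _ = (n - k) * ((n - k - 1).choose k) := by ring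
    have hcast : ((n : ℝ) - 2 * (k : ℝ)) * (((n - k).choose k : ℕ) : ℝ)
        = ((n : ℝ) - (k : ℝ)) * (((n - k - 1).choose k : ℕ) : ℝ) := by
      have h2 : (((n - 2 * k) * ((n - k).choose k) : ℕ) : ℝ)
          = (((n - k) * ((n - k - 1).choose k) : ℕ) : ℝ) := by exact_mod_cast hnat
      push_cast [Nat.cast_sub (show 2 * k ≤ n by omega),
        Nat.cast_sub (show k ≤ n by omega)] at h2
      linarith [h2]
    rw [e1, e3, e2]
    rw [div_mul_eq_mul_div, div_mul_eq_mul_div, div_mul_eq_mul_div, eq_div_iff hnk]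
    linear_combination (-1 * (n : ℝ) * w ^ k * π ^ (n - 1 - 2 * k)) * hcast
  · have e0 : n - 2 * k = 0 := by omega
    have hz2 : ((n - 1 - k).choose k) = 0 := by apply Nat.choose_eq_zero_of_lt; omega
    rw [e0, hz2]
    simp

lemma hasDerivAt_A_w (n : ℕ) (hn : 2 ≤ n) (w π : ℝ) :
    HasDerivAt (fun z => A n z π) ((n : ℝ) * Bf (n - 2) w π) w := by
  have hfun : (fun z => A n z π) = fun z => ∑ k ∈ Finset.range (n + 1),
      ((n : ℝ) / ((n : ℝ) - (k : ℝ)) * (((n - k).choose k : ℕ) : ℝ)) *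
        z ^ k * π ^ (n - 2 * k) := funext (fun z => A_eq n z π)
  rw [hfun]
  have hsum : HasDerivAt (fun z : ℝ => ∑ k ∈ Finset.range (n + 1),
      ((n : ℝ) / ((n : ℝ) - (k : ℝ)) * (((n - k).choose k : ℕ) : ℝ)) *
        z ^ k * π ^ (n - 2 * k))
      (∑ k ∈ Finset.range (n + 1),
        ((n : ℝ) / ((n : ℝ) - (k : ℝ)) * (((n - k).choose k : ℕ) : ℝ)) *
          ((k : ℝ) * w ^ (k - 1)) * π ^ (n - 2 * k)) w := by
    apply HasDerivAt.fun_sum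
    intro k hk
    exact ((hasDerivAt_pow k w).const_mul
      ((n : ℝ) / ((n : ℝ) - (k : ℝ)) * (((n - k).choose k : ℕ) : ℝ))).mul_const
      (π ^ (n - 2 * k))
  convert hsum using 1
  unfold Bf
  rw [Finset.mul_sum]
  rw [show n - 2 + 1 = n - 1 by omega]
  rw [Finset.sum_range_succ' (fun k => ((n : ℝ) / ((n : ℝ) - (k : ℝ)) *
      (((n - k).choose k : ℕ) : ℝ)) * ((k : ℝ) * w ^ (k - 1)) * π ^ (n - 2 * k)) n]
  simp only [Nat.cast_zero, zero_mul, mul_zero, add_zero]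
  rw [Finset.sum_subset (Finset.range_subset_range.mpr (show n - 1 ≤ n by omega))
    (fun i hi hi' => by
      simp only [Finset.mem_range] at hi hi'
      have : ((n - 2 - i).choose i) = 0 := by apply Nat.choose_eq_zero_of_lt; omega
      rw [this]; simp)]
  apply Finset.sum_congr rfl
  intro k hk
  simp only [Finset.mem_range] at hk
  by_cases hA : 2 * (k + 1) ≤ n
  · have e1 : n - 2 * (k + 1) = n - 2 - 2 * k := by omega
    have e3 : n - (k + 1) = n - k - 1 := by omega
    have hnk : ((n : ℝ) - ((k + 1 : ℕ) : ℝ)) ≠ 0 := by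
      have hkn : ((k + 1 : ℕ) : ℝ) < (n : ℝ) := by exact_mod_cast (show k + 1 < n by omega)
      linarith
    have hnat : (k + 1) * ((n - k - 1).choose (k + 1)) = (n - k - 1) * ((n - k - 2).choose k) := by
      have h := Nat.add_one_mul_choose_eq (n - k - 2) k
      rw [show n - k - 2 + 1 = n - k - 1 by omega] at h
      calc (k + 1) * ((n - k - 1).choose (k + 1)) = ((n - k - 1).choose (k + 1)) * (k + 1) := by ring
        _ = (n - k - 1) * ((n - k - 2).choose k) := h.symm
    have hcast : ((k : ℝ) + 1) * (((n - k - 1).choose (k + 1) : ℕ) : ℝ)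
        = ((n : ℝ) - (k : ℝ) - 1) * (((n - k - 2).choose k : ℕ) : ℝ) := by
      have h2 : (((k + 1) * ((n - k - 1).choose (k + 1)) : ℕ) : ℝ)
          = (((n - k - 1) * ((n - k - 2).choose k) : ℕ) : ℝ) := by exact_mod_cast hnat
      push_cast [Nat.cast_sub (show k ≤ n by omega),
        Nat.cast_sub (show 1 ≤ n - k by omega)] at h2
      linarith [h2]
    rw [e1, e3]
    have e2 : n - 2 - k = n - k - 2 := by omega
    rw [e2]
    have hnk' : ((n : ℝ) - ((k : ℝ) + 1)) ≠ 0 := by push_cast at hnk; exact hnk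
    push_cast
    rw [div_mul_eq_mul_div, div_mul_eq_mul_div, div_mul_eq_mul_div, eq_div_iff hnk']
    linear_combination (-1 * (n : ℝ) * w ^ k * π ^ (n - 2 - 2 * k)) * hcast
  · have hz1 : ((n - (k + 1)).choose (k + 1)) = 0 := by apply Nat.choose_eq_zero_of_lt; omega
    have hz2 : ((n - 2 - k).choose k) = 0 := by apply Nat.choose_eq_zero_of_lt; omega
    rw [hz1, hz2]
    simp

lemma sep_lemma (m : ℕ) (hm : 1 ≤ m) (w E1 E2 : ℝ)
    (h : ∀ q : ℝ, E1 = E2 * Bf m w q) : E1 = 0 ∧ E2 = 0 := by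
  set Qp : Polynomial ℝ :=
    ∑ k ∈ Finset.range (m + 1),
      Polynomial.C ((((m - k).choose k : ℕ) : ℝ) * w ^ k) * Polynomial.X ^ (m - 2 * k) with hQp
  have heval : ∀ q : ℝ, Qp.eval q = Bf m w q := by
    intro q
    rw [hQp, Polynomial.eval_finset_sum]
    unfold Bf
    apply Finset.sum_congr rfl
    intro k hk
    simp [Polynomial.eval_mul, Polynomial.eval_pow]
  have hz : Polynomial.C E1 - Polynomial.C E2 * Qp = 0 := by
    apply Polynomial.funext
    intro q
    simp [heval q, ← h q]
  have hcoeffm : Qp.coeff m = 1 := by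
    rw [hQp, Polynomial.finset_sum_coeff]
    rw [Finset.sum_eq_single 0]
    · simp [Polynomial.coeff_C_mul, Polynomial.coeff_X_pow]
    · intro k hk hk0
      simp only [Polynomial.coeff_C_mul, Polynomial.coeff_X_pow]
      simp only [Finset.mem_range] at hk
      have h2 : ¬ (m = m - 2 * k) := by omega
      have h3 : ¬ (m - 2 * k = m) := by omega
      simp [h2, h3]
    · intro habs
      simp at habs
  have hE2 : E2 = 0 := by
    have hc := congrArg (fun P : Polynomial ℝ => P.coeff m) hz
    simp only [Polynomial.coeff_sub, Polynomial.coeff_C_mul, hcoeffm,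
      Polynomial.coeff_zero, mul_one] at hc
    rw [Polynomial.coeff_C, if_neg (by omega : ¬ m = 0)] at hc
    linarith
  refine ⟨?_, hE2⟩
  have := h 0
  rw [hE2] at this
  simpa using this

noncomputable def cc (n : ℕ) : ℝ := (n : ℝ) ^ ((1 : ℝ) / (n : ℝ))

theorem lax_iff_polytropic (n : ℕ) (hn : 3 ≤ n) (u v : ℝ × ℝ → ℝ)
    (hu : ContDiff ℝ 1 u) (hv : ContDiff ℝ 1 v) :
    (∀ x t p : ℝ,
      deriv (fun s => L n u v x s p) t
        = ((n : ℝ) / ((n : ℝ) + 1)) *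
            (deriv (fun y => P n u v y t p) x * deriv (fun q => L n u v x t q) p
              - deriv (fun q => P n u v x t q) p * deriv (fun y => L n u v y t p) x))
    ↔ (∀ x t : ℝ,
        deriv (fun s => u (x, s)) t + u (x, t) * deriv (fun y => u (y, t)) x
          + (v (x, t)) ^ (n - 1) * deriv (fun y => v (y, t)) x = 0 ∧
        deriv (fun s => v (x, s)) t + deriv (fun y => u (y, t) * v (y, t)) x = 0) := by
  have hn2 : 2 ≤ n := by omega
  have hn1 : 1 ≤ n := by omega
  have hnpos : (0:ℝ) < n := by exact_mod_cast (show 0 < n by omega)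
  have hn0 : (n:ℝ) ≠ 0 := ne_of_gt hnpos
  have hn10 : (n:ℝ) + 1 ≠ 0 := by linarith
  have hcpos : 0 < cc n := Real.rpow_pos_of_pos hnpos _
  have hc0 : cc n ≠ 0 := ne_of_gt hcpos
  have hmu : ((n:ℝ)) ^ (-(1 + (1:ℝ)/(n:ℝ))) = 1 / ((n:ℝ) * cc n) := by
    unfold cc
    rw [Real.rpow_neg hnpos.le, Real.rpow_add hnpos, Real.rpow_one]
    exact (one_div _).symm
  have main : ∀ x t : ℝ,
      (∀ p : ℝ, deriv (fun s => L n u v x s p) t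
        = ((n : ℝ) / ((n : ℝ) + 1)) *
            (deriv (fun y => P n u v y t p) x * deriv (fun q => L n u v x t q) p
              - deriv (fun q => P n u v x t q) p * deriv (fun y => L n u v y t p) x))
      ↔ (deriv (fun s => u (x, s)) t + u (x, t) * deriv (fun y => u (y, t)) x
          + (v (x, t)) ^ (n - 1) * deriv (fun y => v (y, t)) x = 0 ∧
        deriv (fun s => v (x, s)) t + deriv (fun y => u (y, t) * v (y, t)) x = 0) := by
    intro x t
    -- differentiability of the four partial maps
    have hud : DifferentiableAt ℝ (fun s => u (x, s)) t :=
      ((hu.differentiable one_ne_zero) (x, t)).comp t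
        ((differentiableAt_const _).prodMk differentiableAt_id)
    have hvd : DifferentiableAt ℝ (fun s => v (x, s)) t :=
      ((hv.differentiable one_ne_zero) (x, t)).comp t
        ((differentiableAt_const _).prodMk differentiableAt_id)
    have huxd : DifferentiableAt ℝ (fun y => u (y, t)) x :=
      ((hu.differentiable one_ne_zero) (x, t)).comp x
        (differentiableAt_id.prodMk (differentiableAt_const _))
    have hvxd : DifferentiableAt ℝ (fun y => v (y, t)) x :=
      ((hv.differentiable one_ne_zero) (x, t)).comp x
        (differentiableAt_id.prodMk (differentiableAt_const _))
    have hproduv : deriv (fun y => u (y, t) * v (y, t)) x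
        = deriv (fun y => u (y, t)) x * v (x, t) + u (x, t) * deriv (fun y => v (y, t)) x :=
      (huxd.hasDerivAt.mul hvxd.hasDerivAt).deriv
    -- derivative of L in t
    have hLt : ∀ p : ℝ, deriv (fun s => L n u v x s p) t
        = 1/(n:ℝ) * ((n:ℝ) * Bf (n-2) (-(v (x, t))) (cc n * p) * -(deriv (fun s => v (x, s)) t))
          + deriv (fun s => u (x, s)) t := by
      intro p
      have hinner : HasDerivAt (fun s : ℝ => -(v (x, s))) (-(deriv (fun s => v (x, s)) t)) t :=
        hvd.hasDerivAt.neg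
      have houter : HasDerivAt (fun z => A n z (cc n * p))
          ((n:ℝ) * Bf (n-2) (-(v (x, t))) (cc n * p)) (-(v (x, t))) :=
        hasDerivAt_A_w n hn2 _ _
      have hA : HasDerivAt (fun s => A n (-(v (x, s))) (cc n * p))
          ((n:ℝ) * Bf (n-2) (-(v (x, t))) (cc n * p) * -(deriv (fun s => v (x, s)) t)) t :=
        by have := houter.comp t hinner; exact this
      have hfull : HasDerivAt (fun s => L n u v x s p)
          (1/(n:ℝ) * ((n:ℝ) * Bf (n-2) (-(v (x, t))) (cc n * p) * -(deriv (fun s => v (x, s)) t))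
            + deriv (fun s => u (x, s)) t) t :=
        (hA.const_mul (1/(n:ℝ))).add hud.hasDerivAt
      exact hfull.deriv
    -- derivative of L in x
    have hLx : ∀ p : ℝ, deriv (fun y => L n u v y t p) x
        = 1/(n:ℝ) * ((n:ℝ) * Bf (n-2) (-(v (x, t))) (cc n * p) * -(deriv (fun y => v (y, t)) x))
          + deriv (fun y => u (y, t)) x := by
      intro p
      have hinner : HasDerivAt (fun y : ℝ => -(v (y, t))) (-(deriv (fun y => v (y, t)) x)) x :=
        hvxd.hasDerivAt.neg
      have houter : HasDerivAt (fun z => A n z (cc n * p))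
          ((n:ℝ) * Bf (n-2) (-(v (x, t))) (cc n * p)) (-(v (x, t))) :=
        hasDerivAt_A_w n hn2 _ _
      have hA : HasDerivAt (fun y => A n (-(v (y, t))) (cc n * p))
          ((n:ℝ) * Bf (n-2) (-(v (x, t))) (cc n * p) * -(deriv (fun y => v (y, t)) x)) x :=
        by have := houter.comp x hinner; exact this
      have hfull : HasDerivAt (fun y => L n u v y t p)
          (1/(n:ℝ) * ((n:ℝ) * Bf (n-2) (-(v (x, t))) (cc n * p) * -(deriv (fun y => v (y, t)) x))
            + deriv (fun y => u (y, t)) x) x :=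
        (hA.const_mul (1/(n:ℝ))).add huxd.hasDerivAt
      exact hfull.deriv
    -- derivative of L in p
    have hLp : ∀ p : ℝ, deriv (fun q => L n u v x t q) p
        = 1/(n:ℝ) * ((n:ℝ) * Bf (n-1) (-(v (x, t))) (cc n * p) * (cc n * 1)) := by
      intro p
      have hinner : HasDerivAt (fun q : ℝ => cc n * q) (cc n * 1) p :=
        (hasDerivAt_id p).const_mul (cc n)
      have houter : HasDerivAt (fun z => A n (-(v (x, t))) z)
          ((n:ℝ) * Bf (n-1) (-(v (x, t))) (cc n * p)) (cc n * p) :=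
        hasDerivAt_A_pi n hn1 _ _
      have hA : HasDerivAt (fun q => A n (-(v (x, t))) (cc n * q))
          ((n:ℝ) * Bf (n-1) (-(v (x, t))) (cc n * p) * (cc n * 1)) p :=
        houter.comp p hinner
      have hfull : HasDerivAt (fun q => L n u v x t q)
          (1/(n:ℝ) * ((n:ℝ) * Bf (n-1) (-(v (x, t))) (cc n * p) * (cc n * 1))) p :=
        (hA.const_mul (1/(n:ℝ))).add_const (u (x, t))
      exact hfull.deriv
    -- derivative of P in x
    have hPx : ∀ p : ℝ, deriv (fun y => P n u v y t p) x
        = 1/((n:ℝ) * cc n) * (((n+1 : ℕ):ℝ) * Bf (n-1) (-(v (x, t))) (cc n * p)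
            * -(deriv (fun y => v (y, t)) x))
          + ((n:ℝ)+1)/(n:ℝ) * deriv (fun y => u (y, t)) x * p := by
      intro p
      have hinner : HasDerivAt (fun y : ℝ => -(v (y, t))) (-(deriv (fun y => v (y, t)) x)) x :=
        hvxd.hasDerivAt.neg
      have houter := hasDerivAt_A_w (n+1) (by omega) (-(v (x, t))) (cc n * p)
      rw [show n+1-2 = n-1 by omega] at houter
      have hA : HasDerivAt (fun y => A (n+1) (-(v (y, t))) (cc n * p))
          (((n+1 : ℕ):ℝ) * Bf (n-1) (-(v (x, t))) (cc n * p)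
            * -(deriv (fun y => v (y, t)) x)) x :=
        by have := houter.comp x hinner; exact this
      have hlin : HasDerivAt (fun y : ℝ => ((n:ℝ)+1)/(n:ℝ) * u (y, t) * p)
          (((n:ℝ)+1)/(n:ℝ) * deriv (fun y => u (y, t)) x * p) x :=
        (huxd.hasDerivAt.const_mul (((n:ℝ)+1)/(n:ℝ))).mul_const p
      have hfull : HasDerivAt (fun y => P n u v y t p)
          (((n:ℝ)) ^ (-(1 + (1:ℝ)/(n:ℝ))) * (((n+1 : ℕ):ℝ) * Bf (n-1) (-(v (x, t))) (cc n * p)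
              * -(deriv (fun y => v (y, t)) x))
            + ((n:ℝ)+1)/(n:ℝ) * deriv (fun y => u (y, t)) x * p) x :=
        (hA.const_mul (((n:ℝ)) ^ (-(1 + (1:ℝ)/(n:ℝ))))).add hlin
      have h := hfull.deriv
      rw [hmu] at h
      exact h
    -- derivative of P in p
    have hPp : ∀ p : ℝ, deriv (fun q => P n u v x t q) p
        = 1/((n:ℝ) * cc n) * (((n+1 : ℕ):ℝ) * Bf n (-(v (x, t))) (cc n * p) * (cc n * 1))
          + ((n:ℝ)+1)/(n:ℝ) * u (x, t) * 1 := by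
      intro p
      have hinner : HasDerivAt (fun q : ℝ => cc n * q) (cc n * 1) p :=
        (hasDerivAt_id p).const_mul (cc n)
      have houter := hasDerivAt_A_pi (n+1) (by omega) (-(v (x, t))) (cc n * p)
      rw [show n+1-1 = n by omega] at houter
      have hA : HasDerivAt (fun q => A (n+1) (-(v (x, t))) (cc n * q))
          (((n+1 : ℕ):ℝ) * Bf n (-(v (x, t))) (cc n * p) * (cc n * 1)) p :=
        houter.comp p hinner
      have hlin : HasDerivAt (fun q : ℝ => ((n:ℝ)+1)/(n:ℝ) * u (x, t) * q)
          (((n:ℝ)+1)/(n:ℝ) * u (x, t) * 1) p :=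
        (hasDerivAt_id p).const_mul (((n:ℝ)+1)/(n:ℝ) * u (x, t))
      have hfull : HasDerivAt (fun q => P n u v x t q)
          (((n:ℝ)) ^ (-(1 + (1:ℝ)/(n:ℝ))) * (((n+1 : ℕ):ℝ) * Bf n (-(v (x, t))) (cc n * p) * (cc n * 1))
            + ((n:ℝ)+1)/(n:ℝ) * u (x, t) * 1) p :=
        (hA.const_mul (((n:ℝ)) ^ (-(1 + (1:ℝ)/(n:ℝ))))).add hlin
      have h := hfull.deriv
      rw [hmu] at h
      exact h
    -- algebraic identities
    have hrec : ∀ p : ℝ, Bf n (-(v (x, t))) (cc n * p)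
        = (cc n * p) * Bf (n-1) (-(v (x, t))) (cc n * p)
          + (-(v (x, t))) * Bf (n-2) (-(v (x, t))) (cc n * p) := by
      intro p
      have h := Bf_rec (n-2) (-(v (x, t))) (cc n * p)
      rw [show n-2+2 = n by omega, show n-2+1 = n-1 by omega] at h
      exact h
    have hcat : ∀ p : ℝ, Bf n (-(v (x, t))) (cc n * p) * Bf (n-2) (-(v (x, t))) (cc n * p)
        - (Bf (n-1) (-(v (x, t))) (cc n * p))^2 = -(v (x, t))^(n-1) := by
      intro p
      have h := Bf_catalan (n-2) (-(v (x, t))) (cc n * p)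
      rw [show n-2+2 = n by omega, show n-2+1 = n-1 by omega] at h
      simpa using h
    -- the key factorization
    have hfact : ∀ p : ℝ,
        (1/(n:ℝ) * ((n:ℝ) * Bf (n-2) (-(v (x, t))) (cc n * p) * -(deriv (fun s => v (x, s)) t))
          + deriv (fun s => u (x, s)) t)
        - ((n : ℝ) / ((n : ℝ) + 1)) *
          ((1/((n:ℝ) * cc n) * (((n+1 : ℕ):ℝ) * Bf (n-1) (-(v (x, t))) (cc n * p)
              * -(deriv (fun y => v (y, t)) x))
            + ((n:ℝ)+1)/(n:ℝ) * deriv (fun y => u (y, t)) x * p)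
            * (1/(n:ℝ) * ((n:ℝ) * Bf (n-1) (-(v (x, t))) (cc n * p) * (cc n * 1)))
          - (1/((n:ℝ) * cc n) * (((n+1 : ℕ):ℝ) * Bf n (-(v (x, t))) (cc n * p) * (cc n * 1))
              + ((n:ℝ)+1)/(n:ℝ) * u (x, t) * 1)
            * (1/(n:ℝ) * ((n:ℝ) * Bf (n-2) (-(v (x, t))) (cc n * p) * -(deriv (fun y => v (y, t)) x))
              + deriv (fun y => u (y, t)) x))
        = (deriv (fun s => u (x, s)) t + u (x, t) * deriv (fun y => u (y, t)) x
            + (v (x, t)) ^ (n - 1) * deriv (fun y => v (y, t)) x)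
          - (deriv (fun s => v (x, s)) t
              + (deriv (fun y => u (y, t)) x * v (x, t) + u (x, t) * deriv (fun y => v (y, t)) x))
            * Bf (n-2) (-(v (x, t))) (cc n * p) := by
      intro p
      have h1 := hrec p
      have h2 := hcat p
      rw [h1]
      have h3 : ((cc n * p) * Bf (n-1) (-(v (x, t))) (cc n * p)
            + (-(v (x, t))) * Bf (n-2) (-(v (x, t))) (cc n * p))
            * Bf (n-2) (-(v (x, t))) (cc n * p)
          - (Bf (n-1) (-(v (x, t))) (cc n * p))^2 = -(v (x, t))^(n-1) := by
        rw [← h1]; exact h2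
      push_cast
      field_simp
      linear_combination (-deriv (fun y => v (y, t)) x) * h3
    -- pointwise equivalence
    constructor
    · intro h
      have hkey : ∀ q : ℝ,
          (deriv (fun s => u (x, s)) t + u (x, t) * deriv (fun y => u (y, t)) x
            + (v (x, t)) ^ (n - 1) * deriv (fun y => v (y, t)) x)
          = (deriv (fun s => v (x, s)) t
              + (deriv (fun y => u (y, t)) x * v (x, t) + u (x, t) * deriv (fun y => v (y, t)) x))
            * Bf (n-2) (-(v (x, t))) q := by
        intro q
        have hp := h (q / cc n)
        rw [hLt, hLx, hLp, hPx, hPp] at hp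
        have hf := hfact (q / cc n)
        rw [show cc n * (q / cc n) = q from by field_simp] at hf hp
        linarith [hf, hp]
      obtain ⟨hE1, hE2⟩ := sep_lemma (n-2) (by omega) (-(v (x, t))) _ _ hkey
      refine ⟨hE1, ?_⟩
      rw [hproduv]
      linarith [hE2]
    · rintro ⟨hE1, hE2⟩ p
      rw [hproduv] at hE2
      rw [hLt, hLx, hLp, hPx, hPp]
      have hf := hfact p
      rw [hE1, hE2] at hf
      linear_combination hf
  constructor
  · intro h x t
    exact (main x t).mp (fun p => h x t p)
  · intro h x t p
    exact (main x t).mpr (h x t) p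
end

section
/- Fix an integer n ≥ 3 and let u, v : ℝ × ℝ → ℝ be continuously differentiable functions of (x,t). Define the Lax function L(x,t,p) = (1/n)·A_n(−v(x,t), n^{1/n}·p) + u(x,t) and the truncated fractional power Q(x,t,p) = n^{(1/n)−1}·A_{n−1}(−v(x,t), n^{1/n}·p), which are polynomials in p with coefficients depending on (x,t). Then the standard Lax equation ∂L/∂t = −(n^{1−2/n}/(n−1))·(∂Q/∂x·∂L/∂p − ∂Q/∂p·∂L/∂x) holds at every (x,t) and every p ∈ ℝ if and only if the elastic medium equations hold, namely ∂v/∂t = −∂u/∂x and ∂u/∂t = −v^{n−2}·∂v/∂x at every (x,t). -/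
/-- The truncated fractional power
`Q(x,t,p) = n^{(1/n)−1}·A_{n−1}(−v(x,t), n^{1/n}·p)`, which is `(L^{1−1/n})₊`. -/
noncomputable def Q (n : ℕ) (u v : ℝ × ℝ → ℝ) (x t p : ℝ) : ℝ :=
  (n : ℝ) ^ ((1 : ℝ) / (n : ℝ) - 1) *
    A (n - 1) (-(v (x, t))) ((n : ℝ) ^ ((1 : ℝ) / (n : ℝ)) * p)

/-! ### Fibonacci and Lucas polynomials -/

noncomputable def Fib : ℕ → ℝ → ℝ → ℝ
  | 0, _, _ => 0
  | 1, _, _ => 1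
  | (m+2), w, q => q * Fib (m+1) w q + w * Fib m w q

noncomputable def Luc : ℕ → ℝ → ℝ → ℝ
  | 0, _, _ => 2
  | 1, _, q => q
  | (m+2), w, q => q * Luc (m+1) w q + w * Luc m w q

lemma Fib_rec (m : ℕ) (w q : ℝ) : Fib (m+2) w q = q * Fib (m+1) w q + w * Fib m w q := rfl
lemma Luc_rec (m : ℕ) (w q : ℝ) : Luc (m+2) w q = q * Luc (m+1) w q + w * Luc m w q := rfl

lemma sum_extend (f : ℕ → ℝ) {a b : ℕ} (hab : a ≤ b)
    (h0 : ∀ k, a ≤ k → k < b → f k = 0) :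
    ∑ k ∈ Finset.range a, f k = ∑ k ∈ Finset.range b, f k :=
  Finset.sum_subset (Finset.range_subset_range.mpr hab)
    (fun k hk hnk => h0 k (by simpa using hnk) (by simpa using hk))

lemma fib_sum (w q : ℝ) : ∀ m : ℕ, Fib (m+1) w q =
    ∑ k ∈ Finset.range (m+1), (((m-k).choose k : ℕ) : ℝ) * w ^ k * q ^ (m - 2*k) := by
  intro m
  induction m using Nat.twoStepInduction with
  | zero => simp [Fib]
  | one => simp [Fib, Finset.sum_range_succ]
  | more m ih1 ih2 =>
    have hfib : Fib (m+3) w q = q * Fib (m+2) w q + w * Fib (m+1) w q := rfl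
    rw [hfib, ih2, ih1, Finset.mul_sum, Finset.mul_sum]
    have e1 : ∑ k ∈ Finset.range (m+2), q * ((((m+1)-k).choose k : ℕ) : ℝ) * w ^ k * q ^ ((m+1) - 2*k)
        = ∑ k ∈ Finset.range (m+3), q * ((((m+1)-k).choose k : ℕ) : ℝ) * w ^ k * q ^ ((m+1) - 2*k) := by
      apply sum_extend _ (by omega)
      intro k hka hkb
      have : ((m+1) - k).choose k = 0 := Nat.choose_eq_zero_of_lt (by omega)
      simp [this]
    have e1' : ∑ k ∈ Finset.range (m+2), q * (((((m+1)-k).choose k : ℕ) : ℝ) * w ^ k * q ^ ((m+1) - 2*k))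
        = ∑ k ∈ Finset.range (m+2), q * ((((m+1)-k).choose k : ℕ) : ℝ) * w ^ k * q ^ ((m+1) - 2*k) := by
      apply Finset.sum_congr rfl; intro k _; ring
    set h : ℕ → ℝ := fun j => if j = 0 then 0 else (((m-(j-1)).choose (j-1) : ℕ) : ℝ) * w ^ j * q ^ (m - 2*(j-1)) with hh
    have e2 : ∑ k ∈ Finset.range (m+1), w * ((((m-k).choose k : ℕ) : ℝ) * w ^ k * q ^ (m - 2*k))
        = ∑ j ∈ Finset.range (m+3), h j := by
      rw [Finset.sum_range_succ' h (m+2)]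
      have hsh : ∀ k ∈ Finset.range (m+2), h (k+1) = w * ((((m-k).choose k : ℕ) : ℝ) * w ^ k * q ^ (m - 2*k)) := by
        intro k _
        simp only [hh, if_neg (Nat.succ_ne_zero k), Nat.add_sub_cancel]
        ring
      rw [Finset.sum_congr rfl hsh]
      have : h 0 = 0 := by simp [hh]
      rw [this, add_zero]
      apply sum_extend _ (by omega)
      intro k hka hkb
      have : (m - k).choose k = 0 := Nat.choose_eq_zero_of_lt (by omega)
      simp [this]
    rw [e1', e1, e2, ← Finset.sum_add_distrib]
    apply Finset.sum_congr rfl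
    intro k hk
    have hk3 : k < m + 3 := Finset.mem_range.mp hk
    rcases Nat.eq_zero_or_pos k with hk0 | hkpos
    · subst hk0
      simp only [hh, if_pos rfl, add_zero, Nat.sub_zero, Nat.choose_zero_right]
      rw [show m + 2 - 2*0 = (m+1-2*0) + 1 by omega, pow_succ]
      push_cast
      ring
    · obtain ⟨j, rfl⟩ : ∃ j, k = j + 1 := ⟨k - 1, by omega⟩
      simp only [hh, if_neg (Nat.succ_ne_zero j), Nat.add_sub_cancel]
      rcases le_or_gt (2*(j+1)) (m+1) with hle | hgt
      · have hch : ((m+2) - (j+1)).choose (j+1)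
            = ((m+1)-(j+1)).choose (j+1) + (m - j).choose j := by
          have h1 : (m+2) - (j+1) = ((m+1)-(j+1)) + 1 := by omega
          have h2 : (m+1) - (j+1) = m - j := by omega
          rw [h1, Nat.choose_succ_succ ((m+1)-(j+1)) j, h2]
          ring
        rw [hch]
        have hexp1 : (m+2) - 2*(j+1) = ((m+1) - 2*(j+1)) + 1 := by omega
        have hexp2 : m - 2*j = (m+2) - 2*(j+1) := by omega
        rw [hexp2, hexp1, pow_succ]
        push_cast
        ring
      · rcases eq_or_lt_of_le (Nat.succ_le_of_lt hgt) with heq | hgt2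
        · have c1 : ((m+2) - (j+1)).choose (j+1) = 1 := by
            rw [show (m+2)-(j+1) = j+1 by omega]; exact Nat.choose_self _
          have c2 : ((m+1) - (j+1)).choose (j+1) = 0 := Nat.choose_eq_zero_of_lt (by omega)
          have c3 : (m - j).choose j = 1 := by
            rw [show m - j = j by omega]; exact Nat.choose_self _
          rw [c1, c2, c3, show (m+2) - 2*(j+1) = 0 by omega, show m - 2*j = 0 by omega]
          push_cast; ring
        · have c1 : ((m+2) - (j+1)).choose (j+1) = 0 := Nat.choose_eq_zero_of_lt (by omega)
          have c2 : ((m+1) - (j+1)).choose (j+1) = 0 := Nat.choose_eq_zero_of_lt (by omega)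
          have c3 : (m - j).choose j = 0 := Nat.choose_eq_zero_of_lt (by omega)
          rw [c1, c2, c3]
          push_cast; ring

lemma coeff_split (n k : ℕ) (hn : 2 ≤ n) (hk : 1 ≤ k) (hkn : k ≤ n) :
    (n:ℝ)/((n:ℝ)-(k:ℝ)) * (((n-k).choose k : ℕ) : ℝ)
      = (((n-k).choose k : ℕ) : ℝ) + (((n-1-k).choose (k-1) : ℕ) : ℝ) := by
  rcases le_or_gt (2*k) n with hle | hgt
  · have hne : (n:ℝ) - (k:ℝ) ≠ 0 := by
      have : ((n - k : ℕ) : ℝ) = (n:ℝ) - k := by push_cast [Nat.cast_sub hkn]; ring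
      rw [← this]
      have : 1 ≤ n - k := by omega
      positivity
    have hnat : (n-k) * ((n-k-1).choose (k-1)) = ((n-k).choose k) * k := by
      have h1 : n - k = (n - k - 1) + 1 := by omega
      have h2 : k = (k-1) + 1 := by omega
      calc (n-k) * ((n-k-1).choose (k-1)) = ((n-k-1)+1) * ((n-k-1).choose (k-1)) := by rw [← h1]
        _ = ((n-k-1)+1).choose ((k-1)+1) * ((k-1)+1) := Nat.add_one_mul_choose_eq _ _
        _ = ((n-k).choose k) * k := by rw [← h1, ← h2]
    have hnat' : ((n-k : ℕ):ℝ) * (((n-k-1).choose (k-1) : ℕ) : ℝ) = (((n-k).choose k : ℕ):ℝ) * k := by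
      exact_mod_cast congrArg (fun t : ℕ => (t : ℝ)) hnat
    have hcast : ((n - k : ℕ) : ℝ) = (n:ℝ) - k := by push_cast [Nat.cast_sub hkn]; ring
    have hcast2 : (n - 1 - k : ℕ) = n - k - 1 := by omega
    rw [hcast2]
    rw [div_mul_eq_mul_div, div_eq_iff hne]
    rw [hcast] at hnat'
    nlinarith [hnat']
  · have c1 : (n-k).choose k = 0 := Nat.choose_eq_zero_of_lt (by omega)
    have c2 : (n-1-k).choose (k-1) = 0 := Nat.choose_eq_zero_of_lt (by omega)
    rw [c1, c2]
    push_cast; ring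

lemma A_eq_fib (m : ℕ) (w q : ℝ) :
    A (m+2) w q = Fib (m+3) w q + w * Fib (m+1) w q := by
  rw [show Fib (m+3) w q = Fib ((m+2)+1) w q from rfl, fib_sum, fib_sum]
  unfold A
  have eA : ∑ k ∈ Finset.range ((m+2)/2 + 1),
        (((m+2) : ℝ) / (((m+2) : ℝ) - (k : ℝ)) * ((((m+2) - k).choose k : ℕ) : ℝ)) * w ^ k * q ^ ((m+2) - 2*k)
      = ∑ k ∈ Finset.range (m+3),
        (((m+2) : ℝ) / (((m+2) : ℝ) - (k : ℝ)) * ((((m+2) - k).choose k : ℕ) : ℝ)) * w ^ k * q ^ ((m+2) - 2*k) := by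
    apply sum_extend _ (by omega)
    intro k hka hkb
    have : ((m+2) - k).choose k = 0 := Nat.choose_eq_zero_of_lt (by omega)
    simp [this]
  push_cast at eA ⊢
  rw [eA]
  set h : ℕ → ℝ := fun j => if j = 0 then 0 else (((m-(j-1)).choose (j-1) : ℕ) : ℝ) * w ^ j * q ^ ((m+2) - 2*j) with hh
  have e2 : w * ∑ k ∈ Finset.range (m+1), (((m-k).choose k : ℕ) : ℝ) * w ^ k * q ^ (m - 2*k)
      = ∑ j ∈ Finset.range (m+3), h j := by
    rw [Finset.mul_sum, Finset.sum_range_succ' h (m+2)]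
    have hsh : ∀ k ∈ Finset.range (m+2), h (k+1) = w * ((((m-k).choose k : ℕ) : ℝ) * w ^ k * q ^ (m - 2*k)) := by
      intro k _
      simp only [hh, if_neg (Nat.succ_ne_zero k), Nat.add_sub_cancel]
      rw [show (m+2) - 2*(k+1) = m - 2*k by omega]
      ring
    rw [Finset.sum_congr rfl hsh]
    have h0 : h 0 = 0 := by simp [hh]
    rw [h0, add_zero]
    apply sum_extend _ (by omega)
    intro k hka hkb
    have : (m - k).choose k = 0 := Nat.choose_eq_zero_of_lt (by omega)
    simp [this]
  rw [e2, ← Finset.sum_add_distrib]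
  apply Finset.sum_congr rfl
  intro k hk
  have hk3 : k < m + 3 := Finset.mem_range.mp hk
  rcases Nat.eq_zero_or_pos k with hk0 | hkpos
  · subst hk0
    simp only [hh, if_pos rfl, add_zero, Nat.sub_zero, Nat.choose_zero_right]
    have : ((m:ℝ)+2) / ((m:ℝ)+2-0) = 1 := by
      rw [sub_zero, div_self]; positivity
    push_cast
    rw [this]
    ring
  · have hc := coeff_split (m+2) k (by omega) hkpos (by omega)
    simp only [hh, if_neg (Nat.ne_of_gt hkpos)]
    push_cast at hc
    rw [show m - (k-1) = m + 1 - k by omega]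
    linear_combination (w ^ k * q ^ (m + 2 - 2*k)) * hc

lemma Luc_eq_fib (w q : ℝ) : ∀ m : ℕ, Luc (m+1) w q = q * Fib (m+1) w q + 2 * w * Fib m w q := by
  intro m
  induction m using Nat.twoStepInduction with
  | zero => simp [Luc, Fib]
  | one => simp [Luc, Fib]; ring
  | more m ih1 ih2 =>
    rw [Luc_rec, ih2, ih1, Fib_rec (m+1), Fib_rec m]
    ring

lemma A_eq_Luc (m : ℕ) (w q : ℝ) : A (m+2) w q = Luc (m+2) w q := by
  rw [A_eq_fib, Luc_eq_fib w q (m+1), Fib_rec]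
  ring

lemma catalan_fib (w q : ℝ) : ∀ m : ℕ,
    Fib m w q * Fib (m+2) w q - (Fib (m+1) w q)^2 = -(-w)^m := by
  intro m
  induction m with
  | zero => simp [Fib]
  | succ m ih =>
    rw [Fib_rec (m+1), Fib_rec m]
    rw [Fib_rec m] at ih
    calc Fib (m+1) w q * (q * (q * Fib (m+1) w q + w * Fib m w q) + w * Fib (m+1) w q)
          - (q * Fib (m+1) w q + w * Fib m w q)^2
        = (-w) * (Fib m w q * (q * Fib (m+1) w q + w * Fib m w q) - Fib (m+1) w q ^ 2) := by ring
      _ = -(-w)^(m+1) := by rw [ih]; ring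

lemma hasDerivAt_Luc_q (w : ℝ) : ∀ m : ℕ, ∀ q : ℝ,
    HasDerivAt (fun q => Luc m w q) ((m : ℝ) * Fib m w q) q := by
  intro m
  induction m using Nat.twoStepInduction with
  | zero => intro q; simpa [Luc, Fib] using (hasDerivAt_const q (2:ℝ))
  | one => intro q; simpa [Luc, Fib] using (hasDerivAt_id' q)
  | more m ih1 ih2 =>
    intro q
    have h1 : HasDerivAt (fun q => q * Luc (m+1) w q)
        (1 * Luc (m+1) w q + q * (((m+1 : ℕ) : ℝ) * Fib (m+1) w q)) q :=
      (hasDerivAt_id q).mul (ih2 q)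
    have h2 : HasDerivAt (fun q => w * Luc m w q) (w * ((m : ℝ) * Fib m w q)) q :=
      (ih1 q).const_mul w
    have h := h1.add h2
    have heq : (fun q => Luc (m+2) w q) = (fun q => q * Luc (m+1) w q + w * Luc m w q) := by
      funext q; exact Luc_rec m w q
    rw [heq]
    refine h.congr_deriv ?_
    rw [Fib_rec, Luc_eq_fib w q m]
    push_cast
    ring

lemma hasDerivAt_Luc_w (q : ℝ) : ∀ m : ℕ, ∀ w : ℝ,
    HasDerivAt (fun w => Luc (m+1) w q) (((m+1 : ℕ) : ℝ) * Fib m w q) w := by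
  intro m
  induction m using Nat.twoStepInduction with
  | zero => intro w; simpa [Luc, Fib] using (hasDerivAt_const w q)
  | one =>
    intro w
    have h : HasDerivAt (fun w : ℝ => q * q + w * 2) (2 : ℝ) w := by
      simpa using ((hasDerivAt_id w).mul_const (2:ℝ)).const_add (q*q)
    have heq : (fun w : ℝ => Luc 2 w q) = fun w : ℝ => q * q + w * 2 := by
      funext w; show q * Luc 1 w q + w * Luc 0 w q = _; simp [Luc]
    rw [heq]
    simpa [Fib] using h
  | more m ih1 ih2 =>
    intro w
    have h1 : HasDerivAt (fun w => q * Luc (m+2) w q)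
        (q * (((m+2 : ℕ) : ℝ) * Fib (m+1) w q)) w := (ih2 w).const_mul q
    have h2 : HasDerivAt (fun w => w * Luc (m+1) w q)
        (1 * Luc (m+1) w q + w * (((m+1 : ℕ) : ℝ) * Fib m w q)) w :=
      (hasDerivAt_id w).mul (ih1 w)
    have h := h1.add h2
    have heq : (fun w => Luc (m+3) w q) = (fun w => q * Luc (m+2) w q + w * Luc (m+1) w q) := by
      funext w; exact Luc_rec (m+1) w q
    rw [heq]
    refine h.congr_deriv ?_
    rw [Fib_rec, Luc_eq_fib w q m]
    push_cast
    ring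

/-! ### Polynomial realization, for nonconstancy -/

noncomputable def fibP (w : ℝ) : ℕ → Polynomial ℝ
  | 0 => 0
  | 1 => 1
  | (m+2) => Polynomial.X * fibP w (m+1) + Polynomial.C w * fibP w m

lemma fibP_eval (w : ℝ) : ∀ m : ℕ, ∀ q : ℝ, (fibP w m).eval q = Fib m w q := by
  intro m
  induction m using Nat.twoStepInduction with
  | zero => intro q; simp [fibP, Fib]
  | one => intro q; simp [fibP, Fib]
  | more m ih1 ih2 =>
    intro q
    show (Polynomial.X * fibP w (m+1) + Polynomial.C w * fibP w m).eval q = _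
    rw [show Fib (m+2) w q = q * Fib (m+1) w q + w * Fib m w q from rfl]
    simp [ih1, ih2]

lemma fibP_monic (w : ℝ) : ∀ m : ℕ, (fibP w (m+1)).Monic ∧ (fibP w (m+1)).natDegree = m := by
  intro m
  induction m using Nat.twoStepInduction with
  | zero => exact ⟨Polynomial.monic_one, Polynomial.natDegree_one⟩
  | one =>
    have h2 : fibP w 2 = Polynomial.X := by
      show Polynomial.X * fibP w 1 + Polynomial.C w * fibP w 0 = _
      show Polynomial.X * 1 + Polynomial.C w * 0 = _
      simp
    rw [h2]
    exact ⟨Polynomial.monic_X, Polynomial.natDegree_X⟩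
  | more m ih1 ih2 =>
    obtain ⟨hm1, hd1⟩ := ih1
    obtain ⟨hm2, hd2⟩ := ih2
    have hrec : fibP w (m+3) = Polynomial.X * fibP w (m+2) + Polynomial.C w * fibP w (m+1) := rfl
    have hmonX : (Polynomial.X * fibP w (m+2)).Monic := Polynomial.monic_X.mul hm2
    have hdegX : (Polynomial.X * fibP w (m+2)).natDegree = m + 2 := by
      rw [Polynomial.natDegree_mul Polynomial.X_ne_zero hm2.ne_zero,
        Polynomial.natDegree_X, hd2]
      omega
    have hltn : (Polynomial.C w * fibP w (m+1)).natDegree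
        < (Polynomial.X * fibP w (m+2)).natDegree := by
      have := Polynomial.natDegree_C_mul_le w (fibP w (m+1))
      omega
    have hlt : (Polynomial.C w * fibP w (m+1)).degree
        < (Polynomial.X * fibP w (m+2)).degree := Polynomial.degree_lt_degree hltn
    refine ⟨?_, ?_⟩
    · rw [hrec]; exact hmonX.add_of_left hlt
    · rw [hrec, Polynomial.natDegree_add_eq_left_of_natDegree_lt hltn, hdegX]

lemma fib_not_const (m : ℕ) (w K c : ℝ) (hc : c ≠ 0)
    (h : ∀ p : ℝ, Fib (m+2) w (c * p) = K) : False := by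
  have heval : ∀ q : ℝ, (fibP w (m+2)).eval q = (Polynomial.C K).eval q := by
    intro q
    rw [fibP_eval, Polynomial.eval_C]
    have := h (q / c)
    rwa [mul_div_cancel₀ q hc] at this
  have hp : fibP w (m+2) = Polynomial.C K := Polynomial.funext heval
  have := (fibP_monic w (m+1)).2
  rw [hp, Polynomial.natDegree_C] at this
  omega

/-! ### Slice derivatives -/

lemma slice_t_hasDerivAt (f : ℝ × ℝ → ℝ) (hf : ContDiff ℝ 1 f) (x t : ℝ) :
    HasDerivAt (fun s => f (x, s)) (deriv (fun s => f (x, s)) t) t := by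
  have hdiff : Differentiable ℝ (fun s : ℝ => f (x, s)) :=
    (hf.differentiable one_ne_zero).comp ((differentiable_const x).prodMk differentiable_id)
  exact (hdiff t).hasDerivAt

lemma slice_x_hasDerivAt (f : ℝ × ℝ → ℝ) (hf : ContDiff ℝ 1 f) (x t : ℝ) :
    HasDerivAt (fun y => f (y, t)) (deriv (fun y => f (y, t)) x) x := by
  have hdiff : Differentiable ℝ (fun y : ℝ => f (y, t)) :=
    (hf.differentiable one_ne_zero).comp (differentiable_id.prodMk (differentiable_const t))
  exact (hdiff x).hasDerivAt

theorem lax_iff_elastic_medium (n : ℕ) (hn : 3 ≤ n) (u v : ℝ × ℝ → ℝ)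
    (hu : ContDiff ℝ 1 u) (hv : ContDiff ℝ 1 v) :
    (∀ x t p : ℝ,
      deriv (fun s => L n u v x s p) t
        = -((n : ℝ) ^ (1 - 2 / (n : ℝ)) / ((n : ℝ) - 1)) *
            (deriv (fun y => Q n u v y t p) x * deriv (fun q => L n u v x t q) p
              - deriv (fun q => Q n u v x t q) p * deriv (fun y => L n u v y t p) x))
    ↔ (∀ x t : ℝ,
        deriv (fun s => v (x, s)) t = -deriv (fun y => u (y, t)) x ∧
        deriv (fun s => u (x, s)) t
          = -(v (x, t)) ^ (n - 2) * deriv (fun y => v (y, t)) x) := by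
  obtain ⟨m, rfl⟩ : ∃ m, n = m + 3 := ⟨n - 3, by omega⟩
  set r : ℝ := ((m + 3 : ℕ) : ℝ) with hr_def
  have hrpos : (0 : ℝ) < r := by rw [hr_def]; positivity
  have hrne : r ≠ 0 := ne_of_gt hrpos
  set c : ℝ := r ^ ((1 : ℝ) / r) with hc_def
  have hcpos : (0 : ℝ) < c := Real.rpow_pos_of_pos hrpos _
  have hcne : c ≠ 0 := ne_of_gt hcpos
  -- rpow facts
  have hE : r ^ ((1 : ℝ) / r - 1) = c / r := by
    rw [Real.rpow_sub hrpos, Real.rpow_one, hc_def]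
  have hc2 : c ^ 2 = r ^ ((2 : ℝ) / r) := by
    rw [hc_def, ← Real.rpow_natCast (r ^ ((1:ℝ)/r)) 2, ← Real.rpow_mul hrpos.le]
    congr 1
    push_cast
    ring
  have hG : r ^ (1 - 2 / r) = r / c ^ 2 := by
    rw [Real.rpow_sub hrpos, Real.rpow_one, hc2]
  have hrm1 : r - 1 ≠ 0 := by
    rw [hr_def]
    push_cast
    intro hcon
    have := Nat.cast_nonneg (α := ℝ) m
    linarith
  -- derivative computations
  have hderivLt : ∀ x t p : ℝ,
      deriv (fun s => L (m+3) u v x s p) t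
        = -Fib (m+2) (-(v (x,t))) (c * p) * deriv (fun s => v (x, s)) t
            + deriv (fun s => u (x, s)) t := by
    intro x t p
    have hL : (fun s : ℝ => L (m+3) u v x s p)
        = fun s => (1 / r) * Luc (m+3) (-(v (x, s))) (c * p) + u (x, s) := by
      funext s
      show (1 / r) * A (m+3) (-(v (x, s))) (c * p) + u (x, s) = _
      rw [A_eq_Luc (m+1)]
    rw [hL]
    have hv' := slice_t_hasDerivAt v hv x t
    have hu' := slice_t_hasDerivAt u hu x t
    have hw : HasDerivAt (fun w => Luc (m+3) w (c * p))
        (r * Fib (m+2) (-(v (x,t))) (c * p)) (-(v (x,t))) := by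
      have h := hasDerivAt_Luc_w (c * p) (m+2) (-(v (x,t)))
      convert h using 2
      all_goals (rw [hr_def]; push_cast; ring)
    have hcomp : HasDerivAt (fun s => Luc (m+3) (-(v (x, s))) (c * p))
        ((r * Fib (m+2) (-(v (x,t))) (c * p)) * (-deriv (fun s => v (x, s)) t)) t := by
      have := hw.comp t hv'.neg
      exact this
    have hfull := (hcomp.const_mul (1/r)).add hu'
    erw [hfull.deriv]
    field_simp
    try ring
  have hderivLx : ∀ x t p : ℝ,
      deriv (fun y => L (m+3) u v y t p) x
        = -Fib (m+2) (-(v (x,t))) (c * p) * deriv (fun y => v (y, t)) x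
            + deriv (fun y => u (y, t)) x := by
    intro x t p
    have hL : (fun y : ℝ => L (m+3) u v y t p)
        = fun y => (1 / r) * Luc (m+3) (-(v (y, t))) (c * p) + u (y, t) := by
      funext y
      show (1 / r) * A (m+3) (-(v (y, t))) (c * p) + u (y, t) = _
      rw [A_eq_Luc (m+1)]
    rw [hL]
    have hv' := slice_x_hasDerivAt v hv x t
    have hu' := slice_x_hasDerivAt u hu x t
    have hw : HasDerivAt (fun w => Luc (m+3) w (c * p))
        (r * Fib (m+2) (-(v (x,t))) (c * p)) (-(v (x,t))) := by
      have h := hasDerivAt_Luc_w (c * p) (m+2) (-(v (x,t)))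
      convert h using 2
      all_goals (rw [hr_def]; push_cast; ring)
    have hcomp : HasDerivAt (fun y => Luc (m+3) (-(v (y, t))) (c * p))
        ((r * Fib (m+2) (-(v (x,t))) (c * p)) * (-deriv (fun y => v (y, t)) x)) x := by
      have := hw.comp x hv'.neg
      exact this
    have hfull := (hcomp.const_mul (1/r)).add hu'
    erw [hfull.deriv]
    field_simp
    try ring
  have hderivLp : ∀ x t p : ℝ,
      deriv (fun q => L (m+3) u v x t q) p = c * Fib (m+3) (-(v (x,t))) (c * p) := by
    intro x t p
    have hL : (fun q : ℝ => L (m+3) u v x t q)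
        = fun q => (1 / r) * Luc (m+3) (-(v (x, t))) (c * q) + u (x, t) := by
      funext q
      show (1 / r) * A (m+3) (-(v (x, t))) (c * q) + u (x, t) = _
      rw [A_eq_Luc (m+1)]
    rw [hL]
    have hin : HasDerivAt (fun q : ℝ => c * q) c p := by
      simpa using (hasDerivAt_id p).const_mul c
    have hout := hasDerivAt_Luc_q (-(v (x,t))) (m+3) (c * p)
    have hcomp : HasDerivAt (fun q => Luc (m+3) (-(v (x,t))) (c * q))
        ((((m+3:ℕ) : ℝ) * Fib (m+3) (-(v (x,t))) (c * p)) * c) p := by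
      have := hout.comp p hin
      exact this
    have hfull := (hcomp.const_mul (1/r)).add (hasDerivAt_const p (u (x,t)))
    erw [hfull.deriv]
    try rw [← hr_def]
    field_simp
    try ring
  have hQfun : ∀ x t p : ℝ, Q (m+3) u v x t p
      = r ^ ((1:ℝ)/r - 1) * Luc (m+2) (-(v (x,t))) (c * p) := by
    intro x t p
    show r ^ ((1:ℝ)/r - 1) * A ((m+3) - 1) (-(v (x,t))) (c * p) = _
    rw [show (m+3) - 1 = m + 2 by omega, A_eq_Luc m]
  have hderivQx : ∀ x t p : ℝ,
      deriv (fun y => Q (m+3) u v y t p) x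
        = (c / r) * ((r - 1) * Fib (m+1) (-(v (x,t))) (c * p)
            * (-deriv (fun y => v (y, t)) x)) := by
    intro x t p
    have hQ : (fun y : ℝ => Q (m+3) u v y t p)
        = fun y => r ^ ((1:ℝ)/r - 1) * Luc (m+2) (-(v (y, t))) (c * p) := by
      funext y; exact hQfun y t p
    rw [hQ]
    have hv' := slice_x_hasDerivAt v hv x t
    have hw : HasDerivAt (fun w => Luc (m+2) w (c * p))
        ((r - 1) * Fib (m+1) (-(v (x,t))) (c * p)) (-(v (x,t))) := by
      have h := hasDerivAt_Luc_w (c * p) (m+1) (-(v (x,t)))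
      convert h using 2
      all_goals (rw [hr_def]; push_cast; ring)
    have hcomp : HasDerivAt (fun y => Luc (m+2) (-(v (y, t))) (c * p))
        (((r - 1) * Fib (m+1) (-(v (x,t))) (c * p)) * (-deriv (fun y => v (y, t)) x)) x := by
      have := hw.comp x hv'.neg
      exact this
    have hfull := hcomp.const_mul (r ^ ((1:ℝ)/r - 1))
    rw [hfull.deriv, hE]
    try ring
  have hderivQp : ∀ x t p : ℝ,
      deriv (fun q => Q (m+3) u v x t q) p
        = (c / r) * ((r - 1) * Fib (m+2) (-(v (x,t))) (c * p) * c) := by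
    intro x t p
    have hQ : (fun q : ℝ => Q (m+3) u v x t q)
        = fun q => r ^ ((1:ℝ)/r - 1) * Luc (m+2) (-(v (x, t))) (c * q) := by
      funext q; exact hQfun x t q
    rw [hQ]
    have hin : HasDerivAt (fun q : ℝ => c * q) c p := by
      simpa using (hasDerivAt_id p).const_mul c
    have hout := hasDerivAt_Luc_q (-(v (x,t))) (m+2) (c * p)
    have hcomp : HasDerivAt (fun q => Luc (m+2) (-(v (x,t))) (c * q))
        ((((m+2:ℕ) : ℝ) * Fib (m+2) (-(v (x,t))) (c * p)) * c) p := by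
      have := hout.comp p hin
      exact this
    have hfull := hcomp.const_mul (r ^ ((1:ℝ)/r - 1))
    rw [hfull.deriv, hE]
    have : ((m+2:ℕ) : ℝ) = r - 1 := by rw [hr_def]; push_cast; ring
    rw [this]
    try ring
  -- the right-hand side in closed form
  have hRHS : ∀ x t p : ℝ,
      -(r ^ (1 - 2 / r) / (r - 1)) *
          (deriv (fun y => Q (m+3) u v y t p) x * deriv (fun q => L (m+3) u v x t q) p
            - deriv (fun q => Q (m+3) u v x t q) p * deriv (fun y => L (m+3) u v y t p) x)
        = -(v (x,t)) ^ (m+1) * deriv (fun y => v (y, t)) x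
            + deriv (fun y => u (y, t)) x * Fib (m+2) (-(v (x,t))) (c * p) := by
    intro x t p
    rw [hderivQx, hderivQp, hderivLp, hderivLx, hG]
    have hcat : Fib (m+1) (-(v (x,t))) (c*p) * Fib (m+3) (-(v (x,t))) (c*p)
        - (Fib (m+2) (-(v (x,t))) (c*p))^2 = -(v (x,t))^(m+1) := by
      have h := catalan_fib (-(v (x,t))) (c * p) (m+1)
      rw [show m+1+2 = m+3 by omega, show m+1+1 = m+2 by omega, neg_neg] at h
      exact h
    have e1 : ∀ F1 F2 F3 vx ux : ℝ,
        -(r / c ^ 2 / (r - 1)) *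
            (c / r * ((r - 1) * F1 * (-vx)) * (c * F3)
              - c / r * ((r - 1) * F2 * c) * (-F2 * vx + ux))
          = (F1 * F3 - F2 ^ 2) * vx + ux * F2 := by
      intro F1 F2 F3 vx ux
      field_simp
      ring
    rw [e1, hcat]
    try ring
  constructor
  · intro h x t
    have hall : ∀ p : ℝ,
        -Fib (m+2) (-(v (x,t))) (c * p) * deriv (fun s => v (x, s)) t
            + deriv (fun s => u (x, s)) t
          = -(v (x,t)) ^ (m+1) * deriv (fun y => v (y, t)) x
            + deriv (fun y => u (y, t)) x * Fib (m+2) (-(v (x,t))) (c * p) := by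
      intro p
      rw [← hderivLt x t p, ← hRHS x t p]
      exact h x t p
    have hkey : deriv (fun y => u (y, t)) x + deriv (fun s => v (x, s)) t = 0 := by
      by_contra hne
      apply fib_not_const m (-(v (x,t)))
        ((deriv (fun s => u (x, s)) t + (v (x,t)) ^ (m+1) * deriv (fun y => v (y, t)) x)
          / (deriv (fun y => u (y, t)) x + deriv (fun s => v (x, s)) t))
        c hcne
      intro p
      rw [eq_div_iff hne]
      linear_combination -(hall p)
    constructor
    · linarith [hkey]
    · rw [show (m+3) - 2 = m + 1 by omega]
      linear_combination hall 0 + Fib (m+2) (-(v (x,t))) (c * 0) * hkey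
  · intro h x t p
    obtain ⟨h1, h2⟩ := h x t
    rw [show (m+3) - 2 = m + 1 by omega] at h2
    rw [hderivLt x t p, hRHS x t p, h1, h2]
    ring
end
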